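/- arXiv:2002.00138 — 9 statements merged into one kernel-verified Lean document; each statement's English description precedes it below -/
import Mathlib

section
/- Let A be an n×n real symmetric matrix with nonnegative entries, with eigenvalues λ₁ ≤ λ₂ ≤ ... ≤ λₙ. Let b₁₁ ≤ b₂₂ ≤ ... ≤ bₙₙ denote the diagonal entries of A arranged in increasing order. Then the sum of the middle eigenvalues satisfies ∑_{i=2}^{n-1} λᵢ ≤ ∑_{i=3}^{n} bᵢᵢ. -/
open Matrix BigOperators Finset

/-- The spectral radius of a real square matrix: the supremum of the moduli
of its complex eigenvalues. -/
noncomputable def specRad {n : ℕ} (A : Matrix (Fin n) (Fin n) ℝ) : ℝ :=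
  sSup ((fun μ : ℂ => ‖μ‖) '' spectrum ℂ (A.map Complex.ofReal))

lemma aux_two (a b c s L : ℝ) (hb : 0 ≤ b)
    (hub : ∀ x y : ℝ, a*x^2 + 2*b*(x*y) + c*y^2 ≤ L*(x^2+y^2))
    (hw : ∃ x y : ℝ, x^2+y^2 ≠ 0 ∧ a*x^2 + 2*b*(x*y) + c*y^2 = s*(x^2+y^2)) :
    a + c ≤ s + L := by
  obtain ⟨D, hD0, hD2⟩ : ∃ D : ℝ, 0 ≤ D ∧ D^2 = ((a-c)/2)^2 + b^2 :=
    ⟨Real.sqrt (((a-c)/2)^2 + b^2), Real.sqrt_nonneg _, Real.sq_sqrt (by positivity)⟩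
  have ha1 : 0 ≤ a - ((a+c)/2 - D) := by nlinarith [sq_nonneg (D + (a-c)/2), sq_nonneg (D - (a-c)/2), sq_nonneg b]
  have hc1 : 0 ≤ c - ((a+c)/2 - D) := by nlinarith [sq_nonneg (D + (a-c)/2), sq_nonneg (D - (a-c)/2), sq_nonneg b]
  have hs : (a+c)/2 - D ≤ s := by
    obtain ⟨x, y, hxy0, hxy⟩ := hw
    have hxyp : 0 < x^2 + y^2 := lt_of_le_of_ne (by positivity) (Ne.symm hxy0)
    have hprod : Real.sqrt (a - ((a+c)/2 - D)) * Real.sqrt (c - ((a+c)/2 - D)) = b := by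
      rw [← Real.sqrt_mul ha1]
      rw [show (a - ((a+c)/2 - D))*(c - ((a+c)/2 - D)) = b^2 by linear_combination hD2]
      exact Real.sqrt_sq hb
    have e1 := Real.sq_sqrt ha1
    have e2 := Real.sq_sqrt hc1
    have hsos : 0 ≤ (Real.sqrt (a - ((a+c)/2 - D)) * x + Real.sqrt (c - ((a+c)/2 - D)) * y)^2 :=
      sq_nonneg _
    have expand : (Real.sqrt (a - ((a+c)/2 - D)) * x + Real.sqrt (c - ((a+c)/2 - D)) * y)^2
        = (a - ((a+c)/2 - D))*x^2 + 2*b*(x*y) + (c - ((a+c)/2 - D))*y^2 := by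
      rw [show ∀ u w : ℝ, (u*x + w*y)^2 = u^2*x^2 + 2*(u*w)*(x*y) + w^2*y^2 from fun u w => by ring]
      rw [e1, e2, hprod]
    rw [expand] at hsos
    have key : ((a+c)/2 - D) * (x^2+y^2) ≤ s*(x^2+y^2) := by nlinarith [hsos, hxy]
    exact le_of_mul_le_mul_right (by linarith) hxyp
  have hL : (a+c)/2 + D ≤ L := by
    by_cases hz : b^2 + (((a+c)/2 + D) - a)^2 = 0
    · have hb0 : b = 0 := by nlinarith [sq_nonneg b, sq_nonneg (((a+c)/2 + D) - a)]
      have hma : (a+c)/2 + D = a := by nlinarith [sq_nonneg b, sq_nonneg (((a+c)/2 + D) - a)]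
      have h1 := hub 1 0
      nlinarith [h1]
    · have hxyp : 0 < b^2 + (((a+c)/2 + D)-a)^2 := lt_of_le_of_ne (by positivity) (Ne.symm hz)
      have h := hub b (((a+c)/2 + D) - a)
      have hid : a*b^2 + 2*b*(b*(((a+c)/2 + D)-a)) + c*(((a+c)/2 + D)-a)^2
          = ((a+c)/2 + D)*(b^2 + (((a+c)/2 + D)-a)^2) := by
        linear_combination (a - (a+c)/2 - D) * hD2
      rw [hid] at h
      exact le_of_mul_le_mul_right (by linarith) hxyp
  linarith

lemma aux_rayleigh {n : ℕ} (A : Matrix (Fin n) (Fin n) ℝ) (hA : A.IsHermitian) (L : ℝ)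
    (hL : ∀ i, hA.eigenvalues i ≤ L) :
    ∀ x : Fin n → ℝ, x ⬝ᵥ (A *ᵥ x) ≤ L * (x ⬝ᵥ x) := by
  intro x
  set U : Matrix (Fin n) (Fin n) ℝ := (hA.eigenvectorUnitary : Matrix (Fin n) (Fin n) ℝ) with hU
  have hU1 : U * star U = 1 := (Matrix.mem_unitaryGroup_iff).mp hA.eigenvectorUnitary.2
  have hstar : star U = Uᵀ := by
    rw [Matrix.star_eq_conjTranspose, Matrix.conjTranspose_eq_transpose_of_trivial]
  have hspec := hA.spectral_theorem
  set y : Fin n → ℝ := star U *ᵥ x with hy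
  have hvm : x ᵥ* U = y := by
    rw [hy, hstar, ← Matrix.vecMul_transpose, Matrix.transpose_transpose]
  have hxAx : x ⬝ᵥ (A *ᵥ x) = ∑ i, hA.eigenvalues i * (y i)^2 := by
    conv_lhs => rw [hspec, Unitary.conjStarAlgAut_apply, ← hU]
    rw [← mulVec_mulVec, ← mulVec_mulVec, dotProduct_mulVec x U, hvm]
    simp [dotProduct, mulVec_diagonal, Function.comp]
    congr 1; funext i; ring
  have hxx : x ⬝ᵥ x = ∑ i, (y i)^2 := by
    have h2 : x ⬝ᵥ ((U * star U) *ᵥ x) = y ⬝ᵥ y := by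
      rw [← mulVec_mulVec, dotProduct_mulVec, hvm, ← hy]
    rw [hU1, one_mulVec] at h2
    rw [h2]
    simp [dotProduct]; congr 1; funext i; ring
  rw [hxAx, hxx, Finset.mul_sum]
  exact Finset.sum_le_sum fun i _ => mul_le_mul_of_nonneg_right (hL i) (sq_nonneg _)

lemma aux_core {n : ℕ} (A : Matrix (Fin n) (Fin n) ℝ)
    (hsym : ∀ i j, A i j = A j i) (hnn : ∀ i j, 0 ≤ A i j)
    (lmin lmax d1 d2 : ℝ) (i0 k0 : Fin n) (hk0 : k0 ≠ i0)
    (hup : ∀ x : Fin n → ℝ, x ⬝ᵥ (A *ᵥ x) ≤ lmax * (x ⬝ᵥ x))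
    (hv : ∃ v : Fin n → ℝ, v ≠ 0 ∧ A *ᵥ v = lmin • v)
    (hd1 : ∀ k, d1 ≤ A k k) (hd2 : ∀ k, k ≠ i0 → d2 ≤ A k k) :
    d1 + d2 ≤ lmin + lmax := by
  classical
  have hbil : ∀ x y : Fin n → ℝ, x ⬝ᵥ (A *ᵥ y) = y ⬝ᵥ (A *ᵥ x) := by
    intro x y
    simp only [dotProduct, mulVec, Finset.mul_sum]
    rw [Finset.sum_comm]
    refine Finset.sum_congr rfl fun i _ => Finset.sum_congr rfl fun j _ => ?_
    rw [hsym j i]; ring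
  have hdiag : ∀ x : Fin n → ℝ, (∀ k, 0 ≤ x k) →
      ∑ k, A k k * (x k * x k) ≤ x ⬝ᵥ (A *ᵥ x) := by
    intro x hx
    simp only [dotProduct, mulVec]
    refine Finset.sum_le_sum fun i _ => ?_
    have h1 : A i i * x i ≤ ∑ j, A i j * x j :=
      Finset.single_le_sum (f := fun j => A i j * x j)
        (fun j _ => mul_nonneg (hnn i j) (hx j)) (Finset.mem_univ i)
    calc A i i * (x i * x i) = (A i i * x i) * x i := by ring
      _ ≤ (∑ j, A i j * x j) * x i := mul_le_mul_of_nonneg_right h1 (hx i)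
      _ = x i * ∑ j, A i j * x j := by ring
  have hQnn : ∀ x y : Fin n → ℝ, (∀ k, 0 ≤ x k) → (∀ k, 0 ≤ y k) →
      0 ≤ x ⬝ᵥ (A *ᵥ y) := by
    intro x y hx hy
    simp only [dotProduct, mulVec]
    refine Finset.sum_nonneg fun i _ => mul_nonneg (hx i) ?_
    exact Finset.sum_nonneg fun j _ => mul_nonneg (hnn i j) (hy j)
  have hsingle : ∀ k : Fin n, A k k ≤ lmax := by
    intro k
    have h := hup (Pi.single k 1)
    simpa [dotProduct, mulVec, Pi.single_apply, Finset.mul_sum, mul_ite] using h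
  -- bound e·(w⬝w) ≤ w⬝Aw from per-entry diagonal bounds
  have hbound : ∀ (w : Fin n → ℝ) (e : ℝ), (∀ k, 0 ≤ w k) →
      (∀ k, e * (w k * w k) ≤ A k k * (w k * w k)) →
      e * (w ⬝ᵥ w) ≤ w ⬝ᵥ (A *ᵥ w) := by
    intro w e hw he
    calc e * (w ⬝ᵥ w) = ∑ k, e * (w k * w k) := by
          simp only [dotProduct]; rw [Finset.mul_sum]
      _ ≤ ∑ k, A k k * (w k * w k) := Finset.sum_le_sum fun k _ => he k
      _ ≤ w ⬝ᵥ (A *ᵥ w) := hdiag w hw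
  obtain ⟨v, hv0, hveq⟩ := hv
  set p : Fin n → ℝ := fun k => max (v k) 0 with hp
  set q : Fin n → ℝ := fun k => max (-v k) 0 with hq
  have hp0 : ∀ k, 0 ≤ p k := fun k => le_max_right _ _
  have hq0 : ∀ k, 0 ≤ q k := fun k => le_max_right _ _
  have hpqz : ∀ k, p k * q k = 0 := by
    intro k
    rcases le_total (v k) 0 with h | h
    · rw [hp]; simp only; rw [max_eq_right h, zero_mul]
    · rw [hq]; simp only; rw [max_eq_right (neg_nonpos.mpr h), mul_zero]
  have hvpq : v = p - q := by
    funext k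
    rcases le_total (v k) 0 with h | h
    · simp only [hp, hq, Pi.sub_apply, max_eq_right h, max_eq_left (neg_nonneg.mpr h)]; ring
    · simp only [hp, hq, Pi.sub_apply, max_eq_left h, max_eq_right (neg_nonpos.mpr h)]; ring
  set π : ℝ := p ⬝ᵥ p with hπdef
  set ρ : ℝ := q ⬝ᵥ q with hρdef
  set P2 : ℝ := p ⬝ᵥ (A *ᵥ p) with hP2def
  set Q2 : ℝ := q ⬝ᵥ (A *ᵥ q) with hQ2def
  set R : ℝ := p ⬝ᵥ (A *ᵥ q) with hRdef
  have hπ0 : 0 ≤ π := Finset.sum_nonneg fun k _ => mul_self_nonneg _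
  have hρ0 : 0 ≤ ρ := Finset.sum_nonneg fun k _ => mul_self_nonneg _
  have hR0 : 0 ≤ R := hQnn p q hp0 hq0
  have hpqdot : p ⬝ᵥ q = 0 := by
    simp only [dotProduct]
    exact Finset.sum_eq_zero fun k _ => hpqz k
  have hvv : v ⬝ᵥ v = π + ρ := by
    rw [hvpq, sub_dotProduct, dotProduct_sub, dotProduct_sub,
      dotProduct_comm q p, hpqdot, ← hπdef, ← hρdef]
    ring
  have hvAv : v ⬝ᵥ (A *ᵥ v) = P2 + Q2 - 2*R := by
    rw [hvpq, Matrix.mulVec_sub, sub_dotProduct, dotProduct_sub,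
      dotProduct_sub, hbil q p, ← hP2def, ← hQ2def, ← hRdef]
    ring
  have hmin : v ⬝ᵥ (A *ᵥ v) = lmin * (v ⬝ᵥ v) := by
    rw [hveq, dotProduct_smul]; simp [smul_eq_mul]
  have hvvpos : 0 < v ⬝ᵥ v := by
    obtain ⟨k, hk⟩ := Function.ne_iff.mp hv0
    refine Finset.sum_pos' (fun i _ => mul_self_nonneg _) ⟨k, Finset.mem_univ k, ?_⟩
    exact mul_self_pos.mpr hk
  have hd2k0 : d2 ≤ lmax := le_trans (hd2 k0 hk0) (hsingle k0)
  -- degenerate-case helper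
  have hdeg : ∀ w : Fin n → ℝ, (∀ k, 0 ≤ w k) → v ⬝ᵥ v = w ⬝ᵥ w →
      v ⬝ᵥ (A *ᵥ v) = w ⬝ᵥ (A *ᵥ w) → d1 + d2 ≤ lmin + lmax := by
    intro w hw hvw hvAw
    have hb := hbound w d1 hw fun k => mul_le_mul_of_nonneg_right (hd1 k) (mul_self_nonneg _)
    have hmin' : w ⬝ᵥ (A *ᵥ w) = lmin * (w ⬝ᵥ w) := by rw [← hvAw, hmin, hvw]
    rw [hmin'] at hb
    have hwpos : 0 < w ⬝ᵥ w := hvw ▸ hvvpos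
    have h2 : d1 ≤ lmin := (mul_le_mul_iff_of_pos_right hwpos).mp hb
    linarith
  rcases eq_or_lt_of_le hρ0 with hρz | hρpos
  · -- q = 0, v = p ≥ 0
    have hqz : ∀ k, q k = 0 := by
      intro k
      by_contra h
      have : 0 < ρ := Finset.sum_pos' (fun i _ => mul_self_nonneg _)
        ⟨k, Finset.mem_univ k, mul_self_pos.mpr h⟩
      linarith
    have hvp : v = p := by
      rw [hvpq]; funext k; simp [hqz k]
    exact hdeg p hp0 (by rw [hvp]) (by rw [hvp])
  rcases eq_or_lt_of_le hπ0 with hπz | hπpos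
  · -- p = 0, v = -q
    have hpz : ∀ k, p k = 0 := by
      intro k
      by_contra h
      have : 0 < π := Finset.sum_pos' (fun i _ => mul_self_nonneg _)
        ⟨k, Finset.mem_univ k, mul_self_pos.mpr h⟩
      linarith
    have hvq : v = -q := by
      rw [hvpq]; funext k; simp [hpz k]
    refine hdeg q hq0 ?_ ?_
    · rw [hvq, neg_dotProduct, dotProduct_neg, neg_neg]
    · rw [hvq, Matrix.mulVec_neg, neg_dotProduct, dotProduct_neg, neg_neg]
  -- main case
  set sπ : ℝ := Real.sqrt π with hsπdef
  set sρ : ℝ := Real.sqrt ρ with hsρdef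
  have hsπ2 : sπ^2 = π := Real.sq_sqrt hπ0
  have hsρ2 : sρ^2 = ρ := Real.sq_sqrt hρ0
  have hsπpos : 0 < sπ := Real.sqrt_pos.mpr hπpos
  have hsρpos : 0 < sρ := Real.sqrt_pos.mpr hρpos
  have hss : sπ * sρ ≠ 0 := by positivity
  have key : P2/π + Q2/ρ ≤ lmin + lmax := by
    apply aux_two (P2/π) (R/(sπ*sρ)) (Q2/ρ) lmin lmax
    · positivity
    · intro x y
      have hexp :
          ((x/sπ) • p + (y/sρ) • q) ⬝ᵥ ((x/sπ) • p + (y/sρ) • q) = (x/sπ)^2*π + (y/sρ)^2*ρ ∧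
          ((x/sπ) • p + (y/sρ) • q) ⬝ᵥ (A *ᵥ ((x/sπ) • p + (y/sρ) • q))
            = (x/sπ)^2*P2 + 2*((x/sπ)*(y/sρ))*R + (y/sρ)^2*Q2 := by
        constructor
        · simp only [add_dotProduct, dotProduct_add,
            smul_dotProduct, dotProduct_smul, smul_eq_mul]
          rw [dotProduct_comm q p, hpqdot, ← hπdef, ← hρdef]; ring
        · simp only [Matrix.mulVec_add, Matrix.mulVec_smul, add_dotProduct,
            dotProduct_add, smul_dotProduct, dotProduct_smul, smul_eq_mul]
          rw [hbil q p, ← hP2def, ← hQ2def, ← hRdef]; ring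
      have h := hup ((x/sπ) • p + (y/sρ) • q)
      rw [hexp.1, hexp.2] at h
      have e1 : (x/sπ)^2 = x^2/π := by rw [div_pow, hsπ2]
      have e2 : (y/sρ)^2 = y^2/ρ := by rw [div_pow, hsρ2]
      have e3 : (x/sπ)*(y/sρ) = (x*y)/(sπ*sρ) := div_mul_div_comm x sπ y sρ
      rw [e1, e2, e3] at h
      have e4 : x^2/π*π = x^2 := div_mul_cancel₀ _ (ne_of_gt hπpos)
      have e5 : y^2/ρ*ρ = y^2 := div_mul_cancel₀ _ (ne_of_gt hρpos)
      rw [e4, e5] at h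
      calc P2/π*x^2 + 2*(R/(sπ*sρ))*(x*y) + Q2/ρ*y^2
          = x^2/π*P2 + 2*((x*y)/(sπ*sρ))*R + y^2/ρ*Q2 := by ring
        _ ≤ lmax*(x^2+y^2) := h
    · refine ⟨sπ, -sρ, ?_, ?_⟩
      · rw [show (-sρ)^2 = sρ^2 by ring, hsπ2, hsρ2]
        positivity
      · rw [show (-sρ)^2 = sρ^2 by ring, hsπ2, hsρ2]
        have e6 : P2/π*π = P2 := div_mul_cancel₀ _ (ne_of_gt hπpos)
        have e7 : Q2/ρ*ρ = Q2 := div_mul_cancel₀ _ (ne_of_gt hρpos)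
        have e8 : R/(sπ*sρ)*(sπ*sρ) = R := div_mul_cancel₀ _ hss
        calc P2/π*π + 2*(R/(sπ*sρ))*(sπ*(-sρ)) + Q2/ρ*ρ
            = P2/π*π + Q2/ρ*ρ - 2*(R/(sπ*sρ)*(sπ*sρ)) := by ring
          _ = P2 + Q2 - 2*R := by rw [e6, e7, e8]
          _ = lmin * (π + ρ) := by rw [← hvAv, hmin, hvv]
  rcases mul_eq_zero.mp (hpqz i0) with hpz | hqz
  · -- p i0 = 0 : d2 via P2, d1 via Q2
    have hP2 : d2 * π ≤ P2 := hbound p d2 hp0 (fun k => by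
      by_cases hk : k = i0
      · rw [hk, hpz]; simp
      · exact mul_le_mul_of_nonneg_right (hd2 k hk) (mul_self_nonneg _))
    have hQ2b : d1 * ρ ≤ Q2 := hbound q d1 hq0
      (fun k => mul_le_mul_of_nonneg_right (hd1 k) (mul_self_nonneg _))
    have h1 : d2 ≤ P2/π := (le_div_iff₀ hπpos).mpr (by linarith)
    have h2 : d1 ≤ Q2/ρ := (le_div_iff₀ hρpos).mpr (by linarith)
    linarith
  · have hQ2b : d2 * ρ ≤ Q2 := hbound q d2 hq0 (fun k => by
      by_cases hk : k = i0
      · rw [hk, hqz]; simp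
      · exact mul_le_mul_of_nonneg_right (hd2 k hk) (mul_self_nonneg _))
    have hP2 : d1 * π ≤ P2 := hbound p d1 hp0
      (fun k => mul_le_mul_of_nonneg_right (hd1 k) (mul_self_nonneg _))
    have h1 : d1 ≤ P2/π := (le_div_iff₀ hπpos).mpr (by linarith)
    have h2 : d2 ≤ Q2/ρ := (le_div_iff₀ hρpos).mpr (by linarith)
    linarith

/-- For a nonnegative real symmetric `n × n` matrix with eigenvalues
`λ₁ ≤ ⋯ ≤ λₙ` and sorted diagonal `b₁₁ ≤ ⋯ ≤ bₙₙ`, we have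
`∑_{i=2}^{n-1} λᵢ ≤ ∑_{i=3}^{n} bᵢᵢ`. -/
theorem stmt0 {n : ℕ} (hn : 2 ≤ n) (A : Matrix (Fin n) (Fin n) ℝ)
    (hA : A.IsHermitian) (hnn : ∀ i j, 0 ≤ A i j)
    (g σ : Equiv.Perm (Fin n))
    (hg : Monotone (hA.eigenvalues ∘ g)) (hσ : Monotone (A.diag ∘ σ)) :
    ∑ i ∈ Finset.univ.filter (fun i : Fin n => 1 ≤ i.val ∧ i.val ≤ n - 2),
        hA.eigenvalues (g i)
      ≤ ∑ i ∈ Finset.univ.filter (fun i : Fin n => 2 ≤ i.val), A.diag (σ i) := by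
  classical
  set i₀ : Fin n := ⟨0, by omega⟩ with hi₀
  set i₁ : Fin n := ⟨1, by omega⟩ with hi₁
  set ilast : Fin n := ⟨n-1, by omega⟩ with hilast
  set lmin : ℝ := hA.eigenvalues (g i₀) with hlmin
  set lmax : ℝ := hA.eigenvalues (g ilast) with hlmaxd
  set d1 : ℝ := A.diag (σ i₀) with hd1d
  set d2 : ℝ := A.diag (σ i₁) with hd2d
  -- trace identity
  have htr : ∑ i, hA.eigenvalues i = ∑ i, A.diag i := by
    have h1 : A.trace = ∑ i, hA.eigenvalues i := by
      conv_lhs => rw [hA.spectral_theorem, Unitary.conjStarAlgAut_apply]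
      rw [Matrix.trace_mul_comm, ← mul_assoc]
      simp [Matrix.trace_diagonal, mul_comm]
    rw [← h1]
    simp [Matrix.trace, Matrix.diag]
  -- monotonicity consequences
  have hlmax : ∀ m, hA.eigenvalues m ≤ lmax := by
    intro m
    have h := hg (show g.symm m ≤ ilast by
      rw [Fin.le_def]; have := (g.symm m).isLt; simp only [hilast]; omega)
    simpa using h
  have hlminle : ∀ m, lmin ≤ hA.eigenvalues m := by
    intro m
    have h := hg (show i₀ ≤ g.symm m by rw [Fin.le_def]; simp [hi₀])
    simpa using h
  have hd1 : ∀ k, d1 ≤ A.diag k := by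
    intro k
    have h := hσ (show i₀ ≤ σ.symm k by rw [Fin.le_def]; simp [hi₀])
    simpa [hd1d] using h
  have hd2 : ∀ k, k ≠ σ i₀ → d2 ≤ A.diag k := by
    intro k hk
    have hne : σ.symm k ≠ i₀ := by
      intro h
      apply hk
      rw [← h, Equiv.apply_symm_apply]
    have h := hσ (show i₁ ≤ σ.symm k by
      rw [Fin.le_def]
      have : (σ.symm k).val ≠ 0 := by
        intro h0; exact hne (Fin.ext (by simp [hi₀, h0]))
      simp only [hi₁]; omega)
    simpa [hd2d] using h
  -- symmetry of entries
  have hsym : ∀ i j, A i j = A j i := by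
    intro i j
    conv_lhs => rw [← hA]
    simp [Matrix.conjTranspose_apply]
  -- core inequality
  have hcore : d1 + d2 ≤ lmin + lmax := by
    refine aux_core A hsym hnn lmin lmax d1 d2 (σ i₀) (σ i₁) ?_ ?_ ?_ hd1 hd2
    · intro h
      have : i₁ = i₀ := σ.injective h
      simp [hi₀, hi₁, Fin.ext_iff] at this
    · exact aux_rayleigh A hA lmax hlmax
    · refine ⟨⇑(hA.eigenvectorBasis (g i₀)), ?_, hA.mulVec_eigenvectorBasis (g i₀)⟩
      intro hc
      apply hA.eigenvectorBasis.orthonormal.ne_zero (g i₀)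
      ext j
      exact congrFun hc j
  -- sum decompositions
  have hsplit1 := Finset.sum_filter_add_sum_filter_not Finset.univ
    (fun i : Fin n => 1 ≤ i.val ∧ i.val ≤ n - 2) (fun i => hA.eigenvalues (g i))
  have hsplit2 := Finset.sum_filter_add_sum_filter_not Finset.univ
    (fun i : Fin n => 2 ≤ i.val) (fun i => A.diag (σ i))
  have hset1 : Finset.univ.filter (fun i : Fin n => ¬(1 ≤ i.val ∧ i.val ≤ n - 2))
      = {i₀, ilast} := by
    ext i
    simp only [Finset.mem_filter, Finset.mem_univ, true_and, Finset.mem_insert,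
      Finset.mem_singleton, Fin.ext_iff, hi₀, hilast]
    have := i.isLt
    omega
  have hset2 : Finset.univ.filter (fun i : Fin n => ¬(2 ≤ i.val)) = {i₀, i₁} := by
    ext i
    simp only [Finset.mem_filter, Finset.mem_univ, true_and, Finset.mem_insert,
      Finset.mem_singleton, Fin.ext_iff, hi₀, hi₁]
    omega
  have hne1 : i₀ ≠ ilast := by simp [hi₀, hilast, Fin.ext_iff]; omega
  have hne2 : i₀ ≠ i₁ := by simp [hi₀, hi₁, Fin.ext_iff]
  rw [hset1, Finset.sum_pair hne1] at hsplit1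
  rw [hset2, Finset.sum_pair hne2] at hsplit2
  have htot1 : ∑ i, hA.eigenvalues (g i) = ∑ i, hA.eigenvalues i := Equiv.sum_comp g _
  have htot2 : ∑ i, A.diag (σ i) = ∑ i, A.diag i := Equiv.sum_comp σ _
  rw [htot1] at hsplit1
  rw [htot2] at hsplit2
  linarith [hsplit1, hsplit2, htr, hcore]
end

section
/- Let A be an n×n real symmetric matrix with nonnegative entries, with smallest eigenvalue λ_min and largest eigenvalue λ_max, and let b₁₁ and b₂₂ denote the smallest and second smallest diagonal entries of A. Then λ_min + λ_max ≥ b₁₁ + b₂₂. -/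
open Matrix BigOperators Finset

section aux

variable {n : ℕ}

private lemma sum_split (f : Fin n → ℝ) (k : Fin n) :
    ∑ l, f l = f k + ∑ l ∈ Finset.univ.erase k, f l :=
  (Finset.add_sum_erase _ f (Finset.mem_univ k)).symm

private lemma quad_eq (M : Matrix (Fin n) (Fin n) ℝ) (x : Fin n → ℝ) :
    x ⬝ᵥ M.mulVec x = ∑ k, ∑ l, M k l * x k * x l := by
  simp only [dotProduct, mulVec]
  refine Finset.sum_congr rfl fun k _ => ?_
  rw [Finset.mul_sum]
  exact Finset.sum_congr rfl fun l _ => by ring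

/-- expansion of the quadratic form at `u + t • e i`. -/
private lemma quad_single_expand (M : Matrix (Fin n) (Fin n) ℝ)
    (hsym : ∀ k l, M k l = M l k) (i : Fin n) (u : Fin n → ℝ) (t : ℝ) :
    (u + t • (Pi.single i 1 : Fin n → ℝ)) ⬝ᵥ M.mulVec (u + t • (Pi.single i 1 : Fin n → ℝ))
      = u ⬝ᵥ M.mulVec u + 2 * t * (∑ l, M i l * u l) + t ^ 2 * M i i := by
  have hMu : M.mulVec (Pi.single i (1:ℝ)) = fun k => M k i := by
    funext k
    simp [mulVec, dotProduct_single]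
  have h1 : (Pi.single i (1:ℝ)) ⬝ᵥ M.mulVec u = ∑ l, M i l * u l := by
    rw [single_dotProduct]
    simp [mulVec, dotProduct]
  have h2 : u ⬝ᵥ M.mulVec (Pi.single i (1:ℝ)) = ∑ l, M i l * u l := by
    rw [hMu]
    simp only [dotProduct]
    exact Finset.sum_congr rfl fun l _ => by rw [hsym l i]; ring
  have h3 : (Pi.single i (1:ℝ)) ⬝ᵥ M.mulVec (Pi.single i (1:ℝ)) = M i i := by
    rw [hMu, single_dotProduct]
    simp
  simp only [Matrix.mulVec_add, Matrix.mulVec_smul, dotProduct_add, add_dotProduct,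
    dotProduct_smul, smul_dotProduct, smul_eq_mul, h1, h2, h3]
  ring

private lemma diag_quad (M : Matrix (Fin n) (Fin n) ℝ) (k : Fin n) :
    (Pi.single k (1:ℝ)) ⬝ᵥ M.mulVec (Pi.single k (1:ℝ)) = M k k := by
  rw [single_dotProduct]
  simp [mulVec, dotProduct_single]

private lemma scalar_final (p q s c W V T : ℝ) (hq0 : 0 ≤ q) (hqp : q ≤ p)
    (hs0 : 0 ≤ s) (hc0 : 0 ≤ c) (hW0 : 0 ≤ W) (hV : 0 ≤ V)
    (hcpqW : c ^ 2 ≤ p * q * W) (hcMw : c ^ 2 ≤ p * V)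
    (hTq : T ≤ q * W) :
    2 * p * s ^ 2 + 2 * T - (p + q) * (s ^ 2 + W) ≤ V - 2 * s * c + s ^ 2 * p := by
  have h2T : 2 * T ≤ 2 * q * W := by linarith
  have hfinal : 2 * s * c ≤ q * s ^ 2 + (p - q) * W + V := by
    rcases eq_or_lt_of_le hq0 with hq0' | hq0'
    · have hzero : p * q * W = 0 := by rw [← hq0']; ring
      have hc2 : c ^ 2 ≤ 0 := by linarith
      have hcsq : c ^ 2 = 0 := le_antisymm hc2 (sq_nonneg c)
      have hczero : c = 0 := by
        nlinarith [hcsq, sq_nonneg (c - 1), sq_nonneg (c + 1), hc0]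
      have hp0 : 0 ≤ p := by linarith
      rw [hczero, ← hq0']
      nlinarith [mul_nonneg hp0 hW0]
    · have hppos : 0 < p := lt_of_lt_of_le hq0' hqp
      have key1 : q * (2 * s * c) ≤ q ^ 2 * s ^ 2 + c ^ 2 := by
        nlinarith [sq_nonneg (q * s - c)]
      have key2 : p * c ^ 2 ≤ p * (q * ((p - q) * W + V)) := by
        have t1 : q * c ^ 2 ≤ q * (p * V) := mul_le_mul_of_nonneg_left hcMw hq0
        have t2 : (p - q) * c ^ 2 ≤ (p - q) * (p * q * W) :=
          mul_le_mul_of_nonneg_left hcpqW (by linarith)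
        nlinarith [t1, t2]
      have key3 : c ^ 2 ≤ q * ((p - q) * W + V) :=
        le_of_mul_le_mul_left (by nlinarith [key2]) hppos
      have key4 : q * (2 * s * c) ≤ q * (q * s ^ 2 + (p - q) * W + V) := by
        nlinarith [key1, key3]
      exact le_of_mul_le_mul_left (by nlinarith [key4]) hq0'
  nlinarith [h2T, hfinal]

/-- Core lemma ("claim C"): if `M` is a positive semidefinite symmetric real matrix with
nonpositive off-diagonal entries, whose diagonal entries away from `i` are at most `q`,
with `q ≤ M i i`, then the quadratic form of `M` is bounded by `(M i i + q) * ‖z‖²`. -/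
private lemma claimC (M : Matrix (Fin n) (Fin n) ℝ)
    (hsym : ∀ k l, M k l = M l k)
    (hpsd : ∀ x : Fin n → ℝ, 0 ≤ x ⬝ᵥ M.mulVec x)
    (hoff : ∀ k l, k ≠ l → M k l ≤ 0)
    (i : Fin n) (q : ℝ)
    (hq : ∀ k, k ≠ i → M k k ≤ q)
    (hqp : q ≤ M i i) (hq0 : 0 ≤ q)
    (z : Fin n → ℝ) :
    z ⬝ᵥ M.mulVec z ≤ (M i i + q) * (z ⬝ᵥ z) := by
  set p := M i i with hp
  have hp0 : 0 ≤ p := le_trans hq0 hqp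
  have hdiag : ∀ k, 0 ≤ M k k := by
    intro k
    have h := hpsd (Pi.single k 1)
    rwa [diag_quad M k] at h
  set y : Fin n → ℝ := fun k => |z k| with hy
  have hyz2 : ∀ k, y k * y k = z k * z k := fun k => abs_mul_abs_self (z k)
  have hynn : ∀ k, 0 ≤ y k := fun k => abs_nonneg _
  -- Part A : zᵀMz + yᵀMy ≤ ∑ 2 M_kk z_k²
  have partA : z ⬝ᵥ M.mulVec z + y ⬝ᵥ M.mulVec y ≤ ∑ k, 2 * M k k * (z k * z k) := by
    rw [quad_eq, quad_eq, ← Finset.sum_add_distrib]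
    refine Finset.sum_le_sum fun k _ => ?_
    rw [← Finset.sum_add_distrib, sum_split (fun l => M k l * z k * z l + M k l * y k * y l) k]
    have hrest : (∑ l ∈ Finset.univ.erase k, (M k l * z k * z l + M k l * y k * y l)) ≤ 0 := by
      refine Finset.sum_nonpos fun l hl => ?_
      have hlk : l ≠ k := (Finset.mem_erase.mp hl).1
      have h1 : M k l ≤ 0 := hoff k l (fun h => hlk h.symm)
      have h2 : 0 ≤ z k * z l + y k * y l := by
        have habs : |z k * z l| = y k * y l := by
          rw [abs_mul]
        nlinarith [neg_abs_le (z k * z l)]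
      nlinarith
    have hdiagterm : M k k * z k * z k + M k k * y k * y k = 2 * M k k * (z k * z k) := by
      have h := hyz2 k
      rw [mul_assoc, mul_assoc, h]
      ring
    linarith
  have hsum_zy : (z ⬝ᵥ z) = (y ⬝ᵥ y) := by
    simp only [dotProduct]
    exact Finset.sum_congr rfl fun k _ => (hyz2 k).symm
  have hdsum_zy : (∑ k, 2 * M k k * (z k * z k)) = ∑ k, 2 * M k k * (y k * y k) := by
    exact Finset.sum_congr rfl fun k _ => by rw [hyz2 k]
  -- Part B : ∑ 2 M_kk y_k² - (p+q) * (y⬝ᵥy) ≤ yᵀMy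
  have partB : (∑ k, 2 * M k k * (y k * y k)) - (p + q) * (y ⬝ᵥ y) ≤ y ⬝ᵥ M.mulVec y := by
    set s := y i with hs
    have hs0 : 0 ≤ s := hynn i
    set w : Fin n → ℝ := Function.update y i 0 with hw
    have hwi : w i = 0 := Function.update_self i 0 y
    have hwk : ∀ k, k ≠ i → w k = y k := fun k hk => Function.update_of_ne hk 0 y
    have hwnn : ∀ k, 0 ≤ w k := by
      intro k
      by_cases hk : k = i
      · rw [hk, hwi]
      · rw [hwk k hk]; exact hynn k
    have hdecomp : y = w + s • (Pi.single i 1 : Fin n → ℝ) := by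
      funext k
      by_cases hk : k = i
      · subst hk
        simp [hwi, hs]
      · simp [hwk k hk, Pi.single_eq_of_ne hk]
    set γ : ℝ := ∑ l, M i l * w l with hγ
    set c : ℝ := -γ with hc
    have hγ_le : γ ≤ 0 := by
      refine Finset.sum_nonpos fun l _ => ?_
      by_cases hl : l = i
      · subst hl; rw [hwi]; simp
      · exact mul_nonpos_of_nonpos_of_nonneg (hoff i l (fun h => hl h.symm)) (hwnn l)
    have hc0 : 0 ≤ c := by rw [hc]; linarith
    -- key discriminant lemma
    have hKey : ∀ u : Fin n → ℝ, (∑ l, M i l * u l) ^ 2 ≤ p * (u ⬝ᵥ M.mulVec u) := by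
      intro u
      set g : ℝ := ∑ l, M i l * u l with hg
      have hpsd' : ∀ t : ℝ, 0 ≤ u ⬝ᵥ M.mulVec u + 2 * t * g + t ^ 2 * p := by
        intro t
        have h := hpsd (u + t • (Pi.single i 1 : Fin n → ℝ))
        rwa [quad_single_expand M hsym i u t] at h
      rcases eq_or_lt_of_le hp0 with hp0' | hp0'
      · have hg0 : g = 0 := by
          by_contra hgne
          have h1 := hpsd' (-(u ⬝ᵥ M.mulVec u + 1) / (2 * g))
          have h2 : 2 * (-(u ⬝ᵥ M.mulVec u + 1) / (2 * g)) * g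
              = -(u ⬝ᵥ M.mulVec u + 1) := by
            field_simp
          rw [h2, ← hp0'] at h1
          nlinarith
        rw [hg0, ← hp0']
        simpa using hpsd u
      · have h1 := hpsd' (-g / p)
        have h2 : 2 * (-g / p) * g + (-g / p) ^ 2 * p = -(g ^ 2) / p := by
          field_simp
          ring
        rw [add_assoc, h2] at h1
        have h3 : 0 ≤ (u ⬝ᵥ M.mulVec u) * p - g ^ 2 := by
          have h4 : 0 ≤ (u ⬝ᵥ M.mulVec u + -(g ^ 2) / p) * p := by
            apply mul_nonneg h1 (le_of_lt hp0')
          have h5 : (u ⬝ᵥ M.mulVec u + -(g ^ 2) / p) * p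
              = (u ⬝ᵥ M.mulVec u) * p - g ^ 2 := by
            field_simp
            ring
          rwa [h5] at h4
        nlinarith [h3]
    set bv : Fin n → ℝ := fun l => if l = i then 0 else -M i l with hbv
    have hbvnn : ∀ l, 0 ≤ bv l := by
      intro l
      by_cases hl : l = i
      · simp [hbv, hl]
      · simp only [hbv, if_neg hl]
        linarith [hoff i l (fun h => hl h.symm)]
    have hbvi : bv i = 0 := by simp [hbv]
    set N : ℝ := ∑ l, bv l * bv l with hN
    have hN0 : 0 ≤ N := Finset.sum_nonneg fun l _ => mul_nonneg (hbvnn l) (hbvnn l)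
    have hgbv : (∑ l, M i l * bv l) = -N := by
      rw [hN, ← Finset.sum_neg_distrib]
      refine Finset.sum_congr rfl fun l _ => ?_
      by_cases hl : l = i
      · simp [hbv, hl]
      · simp only [hbv, if_neg hl]; ring
    have hbvM : bv ⬝ᵥ M.mulVec bv ≤ q * N := by
      rw [quad_eq, hN, Finset.mul_sum]
      refine Finset.sum_le_sum fun k _ => ?_
      rw [sum_split (fun l => M k l * bv k * bv l) k]
      have hrest : (∑ l ∈ Finset.univ.erase k, M k l * bv k * bv l) ≤ 0 := by
        refine Finset.sum_nonpos fun l hl => ?_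
        have hlk : l ≠ k := (Finset.mem_erase.mp hl).1
        have h1 : M k l ≤ 0 := hoff k l (fun h => hlk h.symm)
        nlinarith [mul_nonneg (hbvnn k) (hbvnn l)]
      have hdt : M k k * bv k * bv k ≤ q * (bv k * bv k) := by
        by_cases hk : k = i
        · subst hk
          rw [hbvi]
          simp
        · have := hq k hk
          nlinarith [mul_nonneg (hbvnn k) (hbvnn k)]
      linarith
    have hNpq : N ≤ p * q := by
      have h1 := hKey bv
      rw [hgbv] at h1
      have h2 : p * (bv ⬝ᵥ M.mulVec bv) ≤ p * (q * N) := mul_le_mul_of_nonneg_left hbvM hp0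
      nlinarith [hN0, h2, h1, mul_nonneg hp0 hq0]
    set W : ℝ := w ⬝ᵥ w with hW
    have hW0 : 0 ≤ W := Finset.sum_nonneg fun l _ => mul_self_nonneg _
    have hcNW : c ^ 2 ≤ N * W := by
      have hcsum : c = ∑ l, bv l * w l := by
        rw [hc, hγ, ← Finset.sum_neg_distrib]
        refine Finset.sum_congr rfl fun l _ => ?_
        by_cases hl : l = i
        · simp [hbv, hl, hwi]
        · simp only [hbv, if_neg hl]; ring
      have hcs := Finset.sum_mul_sq_le_sq_mul_sq Finset.univ bv w
      rw [hcsum]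
      calc (∑ l, bv l * w l) ^ 2 ≤ (∑ l, bv l ^ 2) * ∑ l, w l ^ 2 := hcs
        _ = N * W := by
            rw [hN, hW]
            simp only [dotProduct]
            congr 1 <;> exact Finset.sum_congr rfl fun l _ => by ring
    have hcpqW : c ^ 2 ≤ p * q * W := by
      have h1 : N * W ≤ p * q * W := mul_le_mul_of_nonneg_right hNpq hW0
      linarith [hcNW]
    have hcMw : c ^ 2 ≤ p * (w ⬝ᵥ M.mulVec w) := by
      have h := hKey w
      rw [← hγ] at h
      calc c ^ 2 = γ ^ 2 := by rw [hc]; ring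
        _ ≤ _ := h
    have hwMw : 0 ≤ w ⬝ᵥ M.mulVec w := hpsd w
    set T : ℝ := ∑ k, M k k * (w k * w k) with hT
    have hTq : T ≤ q * W := by
      rw [hT, hW]
      simp only [dotProduct]
      rw [Finset.mul_sum]
      refine Finset.sum_le_sum fun k _ => ?_
      by_cases hk : k = i
      · rw [hk, hwi]
        simp
      · exact mul_le_mul_of_nonneg_right (hq k hk) (mul_self_nonneg _)
    have hyMy : y ⬝ᵥ M.mulVec y = w ⬝ᵥ M.mulVec w - 2 * s * c + s ^ 2 * p := by
      rw [hdecomp, quad_single_expand M hsym i w s, ← hγ, hc]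
      ring
    have hyy : y ⬝ᵥ y = s ^ 2 + W := by
      rw [hW]
      simp only [dotProduct]
      rw [sum_split (fun k => y k * y k) i, sum_split (fun k => w k * w k) i, hwi]
      have heq : (∑ k ∈ Finset.univ.erase i, y k * y k)
          = ∑ k ∈ Finset.univ.erase i, w k * w k := by
        refine Finset.sum_congr rfl fun k hk => ?_
        rw [hwk k (Finset.mem_erase.mp hk).1]
      rw [heq]
      ring
    have hDiagSum : (∑ k, 2 * M k k * (y k * y k)) = 2 * p * s ^ 2 + 2 * T := by
      rw [hT, Finset.mul_sum,
        sum_split (fun k => 2 * M k k * (y k * y k)) i,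
        sum_split (fun k => 2 * (M k k * (w k * w k))) i, hwi]
      have heq : (∑ k ∈ Finset.univ.erase i, 2 * M k k * (y k * y k))
          = ∑ k ∈ Finset.univ.erase i, 2 * (M k k * (w k * w k)) := by
        refine Finset.sum_congr rfl fun k hk => ?_
        rw [hwk k (Finset.mem_erase.mp hk).1]
        ring
      rw [heq, ← hp]
      ring
    rw [hyMy, hyy, hDiagSum]
    exact scalar_final p q s c W (w ⬝ᵥ M.mulVec w) T hq0 hqp hs0 hc0 hW0 hwMw hcpqW hcMw hTq
  -- combine
  have hA' := partA
  rw [hdsum_zy] at hA'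
  have hgoal : z ⬝ᵥ M.mulVec z ≤ (p + q) * (y ⬝ᵥ y) := by linarith
  rw [hsum_zy]
  exact hgoal

end aux

/-- For a nonnegative real symmetric matrix,
`λ_min + λ_max ≥ b₁₁ + b₂₂`, the sum of the two smallest diagonal entries. -/
theorem stmt1 {n : ℕ} (hn : 2 ≤ n) (A : Matrix (Fin n) (Fin n) ℝ)
    (hA : A.IsHermitian) (hnn : ∀ i j, 0 ≤ A i j)
    (σ : Equiv.Perm (Fin n)) (hσ : Monotone (A.diag ∘ σ)) :
    A.diag (σ ⟨0, by omega⟩) + A.diag (σ ⟨1, by omega⟩)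
      ≤ (⨅ i, hA.eigenvalues i) + (⨆ i, hA.eigenvalues i) := by
  haveI : NeZero n := ⟨by omega⟩
  set i : Fin n := σ ⟨0, by omega⟩ with hi
  set j : Fin n := σ ⟨1, by omega⟩ with hj
  set a : ℝ := A.diag i with ha
  set b : ℝ := A.diag j with hb
  set ev : Fin n → ℝ := hA.eigenvalues with hev
  set Λ : ℝ := ⨆ k, ev k with hΛ
  -- basic diagonal order facts
  have hord1 : ∀ k, a ≤ A k k := by
    intro k
    have h1 : (⟨0, by omega⟩ : Fin n) ≤ σ.symm k := Fin.mk_le_mk.mpr (Nat.zero_le _)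
    have h2 := hσ h1
    simpa [Function.comp, hi, ha, Matrix.diag] using h2
  have hord2 : ∀ k, k ≠ i → b ≤ A k k := by
    intro k hk
    have hm : σ.symm k ≠ ⟨0, by omega⟩ := by
      intro hcon
      apply hk
      rw [hi, ← hcon]
      simp
    have hval : (σ.symm k).val ≠ 0 := by
      intro h0
      exact hm (Fin.ext (by simpa using h0))
    have h1 : (⟨1, by omega⟩ : Fin n) ≤ σ.symm k := by
      rw [Fin.le_def]
      simpa using Nat.one_le_iff_ne_zero.mpr hval
    have h2 := hσ h1
    simpa [Function.comp, hj, hb, Matrix.diag] using h2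
  have hab : a ≤ b := by
    have h1 : (⟨0, by omega⟩ : Fin n) ≤ (⟨1, by omega⟩ : Fin n) := Fin.mk_le_mk.mpr (by omega)
    simpa [Function.comp, hi, hj, ha, hb, Matrix.diag] using hσ h1
  -- eigen data
  set vv : Fin n → Fin n → ℝ := fun k => ⇑(hA.eigenvectorBasis k) with hvv
  have heig : ∀ k, A.mulVec (vv k) = ev k • vv k := fun k => hA.mulVec_eigenvectorBasis k
  have honb : ∀ k l, vv k ⬝ᵥ vv l = if k = l then (1:ℝ) else 0 := by
    intro k l
    have h1 := orthonormal_iff_ite.mp (hA.eigenvectorBasis).orthonormal k l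
    rw [← h1, EuclideanSpace.inner_eq_star_dotProduct]
    simp only [dotProduct, Pi.star_apply, star_trivial]
    exact Finset.sum_congr rfl fun x _ => mul_comm _ _
  -- expansion of vectors in the eigenbasis
  have hdot : ∀ (c e : Fin n → ℝ), (∑ k, c k • vv k) ⬝ᵥ (∑ l, e l • vv l) = ∑ k, c k * e k := by
    intro c e
    calc (∑ k, c k • vv k) ⬝ᵥ (∑ l, e l • vv l)
        = ∑ x, (∑ k, c k * vv k x) * (∑ l, e l * vv l x) := by
          simp only [dotProduct, Finset.sum_apply, Pi.smul_apply, smul_eq_mul]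
      _ = ∑ x, ∑ k, ∑ l, (c k * vv k x) * (e l * vv l x) := by
          refine Finset.sum_congr rfl fun x _ => ?_
          rw [Finset.sum_mul_sum]
      _ = ∑ k, ∑ l, (c k * e l) * (vv k ⬝ᵥ vv l) := by
          rw [Finset.sum_comm]
          refine Finset.sum_congr rfl fun k _ => ?_
          rw [Finset.sum_comm]
          refine Finset.sum_congr rfl fun l _ => ?_
          simp only [dotProduct]
          rw [Finset.mul_sum]
          exact Finset.sum_congr rfl fun x _ => by ring
      _ = ∑ k, c k * e k := by
          refine Finset.sum_congr rfl fun k _ => ?_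
          simp only [honb]
          rw [Finset.sum_congr rfl (fun l (_ : l ∈ Finset.univ) => by
            rw [mul_ite, mul_one, mul_zero] : ∀ l ∈ Finset.univ,
              c k * e l * (if k = l then (1:ℝ) else 0) = if k = l then c k * e l else 0)]
          rw [Finset.sum_ite_eq]
          simp
  -- expansion of an arbitrary vector
  have hxfun : ∀ x : Fin n → ℝ, ∃ c : Fin n → ℝ, x = ∑ k, c k • vv k := by
    intro x
    refine ⟨fun k => vv k ⬝ᵥ x, ?_⟩
    have h2 := (hA.eigenvectorBasis).sum_repr' (WithLp.toLp 2 x : EuclideanSpace ℝ (Fin n))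
    have h3 : ∀ k, (inner ℝ (hA.eigenvectorBasis k) (WithLp.toLp 2 x : EuclideanSpace ℝ (Fin n)) : ℝ)
        = vv k ⬝ᵥ x := by
      intro k
      rw [EuclideanSpace.inner_eq_star_dotProduct]
      simp only [dotProduct, Pi.star_apply, star_trivial]
      exact Finset.sum_congr rfl fun x _ => mul_comm _ _
    conv_lhs => rw [← WithLp.ofLp_toLp 2 x, ← h2]
    funext j'
    rw [WithLp.ofLp_sum, Finset.sum_apply]
    rw [Finset.sum_apply]
    refine Finset.sum_congr rfl fun k _ => ?_
    rw [h3 k]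
    rfl
  haveI : Nonempty (Fin n) := ⟨⟨0, by omega⟩⟩
  have hbdd : BddAbove (Set.range ev) := Set.Finite.bddAbove (Set.finite_range ev)
  have hevle : ∀ k, ev k ≤ Λ := fun k => le_ciSup hbdd k
  -- Rayleigh upper bound
  have hray : ∀ x : Fin n → ℝ, x ⬝ᵥ A.mulVec x ≤ Λ * (x ⬝ᵥ x) := by
    intro x
    obtain ⟨c, hx⟩ := hxfun x
    have hAx : A.mulVec x = ∑ l, (ev l * c l) • vv l := by
      rw [hx, ← Matrix.mulVecLin_apply, map_sum]
      refine Finset.sum_congr rfl fun l _ => ?_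
      rw [Matrix.mulVecLin_apply, Matrix.mulVec_smul, heig l, smul_smul, mul_comm]
    have h1 : x ⬝ᵥ A.mulVec x = ∑ k, c k * (ev k * c k) := by
      rw [hAx]
      nth_rewrite 1 [hx]
      exact hdot c _
    have h2 : x ⬝ᵥ x = ∑ k, c k * c k := by
      nth_rewrite 1 [hx]
      nth_rewrite 1 [hx]
      exact hdot c c
    rw [h1, h2, Finset.mul_sum]
    refine Finset.sum_le_sum fun k _ => ?_
    nlinarith [hevle k, mul_self_nonneg (c k)]
  -- the matrix M = Λ•1 - A
  set M : Matrix (Fin n) (Fin n) ℝ :=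
    Matrix.of (fun k l => (if k = l then Λ else 0) - A k l) with hM
  have hMentry : ∀ k l, M k l = (if k = l then Λ else 0) - A k l := fun k l => rfl
  have hMq : ∀ x : Fin n → ℝ, x ⬝ᵥ M.mulVec x = Λ * (x ⬝ᵥ x) - x ⬝ᵥ A.mulVec x := by
    intro x
    have hMx : ∀ k, (M.mulVec x) k = Λ * x k - (A.mulVec x) k := by
      intro k
      simp only [mulVec, dotProduct, hMentry, sub_mul]
      rw [Finset.sum_sub_distrib]
      congr 1
      rw [Finset.sum_congr rfl (fun l (_ : l ∈ Finset.univ) => by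
        rw [ite_mul, zero_mul] : ∀ l ∈ Finset.univ,
          (if k = l then Λ else 0) * x l = if k = l then Λ * x l else 0)]
      rw [Finset.sum_ite_eq]
      simp
    simp only [dotProduct, hMx, mul_sub]
    rw [Finset.sum_sub_distrib, Finset.mul_sum]
    congr 1
    exact Finset.sum_congr rfl fun k _ => by ring
  have hAsym : ∀ k l, A k l = A l k := by
    intro k l
    have h := hA.apply l k
    simpa using h
  have hsymM : ∀ k l, M k l = M l k := by
    intro k l
    simp only [hMentry]
    rw [hAsym k l]
    congr 1
    by_cases h : k = l
    · simp [h]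
    · rw [if_neg h, if_neg (fun hc => h hc.symm)]
  have hpsdM : ∀ x : Fin n → ℝ, 0 ≤ x ⬝ᵥ M.mulVec x := by
    intro x
    rw [hMq x]
    linarith [hray x]
  have hoffM : ∀ k l, k ≠ l → M k l ≤ 0 := by
    intro k l hkl
    rw [hMentry, if_neg hkl]
    linarith [hnn k l]
  have hsingle : ∀ k : Fin n, (Pi.single k 1 : Fin n → ℝ) ⬝ᵥ (Pi.single k 1) = 1 := by
    intro k
    rw [single_dotProduct, Pi.single_eq_same, mul_one]
  have hdiagA : ∀ k : Fin n, (Pi.single k 1 : Fin n → ℝ) ⬝ᵥ A.mulVec (Pi.single k 1) = A k k := by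
    intro k
    rw [single_dotProduct]
    simp [mulVec, dotProduct_single]
  have hΛdiag : ∀ k, A k k ≤ Λ := by
    intro k
    have h := hray (Pi.single k 1)
    rwa [hdiagA k, hsingle k, mul_one] at h
  have hq0 : 0 ≤ Λ - b := by
    have := hΛdiag j
    simp only [hb, Matrix.diag] at *
    linarith
  have hqM : ∀ k, k ≠ i → M k k ≤ Λ - b := by
    intro k hk
    rw [hMentry, if_pos rfl]
    linarith [hord2 k hk]
  have hqpM : Λ - b ≤ M i i := by
    rw [hMentry, if_pos rfl]
    simp only [ha, hb, Matrix.diag] at *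
    linarith [hab]
  have hMii : M i i = Λ - a := by
    rw [hMentry, if_pos rfl]
    rfl
  -- apply claimC to every eigenvector
  have hklow : ∀ k, a + b - Λ ≤ ev k := by
    intro k
    have hC := claimC M hsymM hpsdM hoffM i (Λ - b) hqM hqpM hq0 (vv k)
    have h1 : vv k ⬝ᵥ vv k = 1 := by rw [honb k k, if_pos rfl]
    have h2 : vv k ⬝ᵥ A.mulVec (vv k) = ev k := by
      rw [heig k, dotProduct_smul, smul_eq_mul, h1, mul_one]
    rw [hMq (vv k), h1, h2, hMii, mul_one] at hC
    linarith
  have hinf : a + b - Λ ≤ ⨅ k, ev k := le_ciInf hklow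
  have final : a + b ≤ (⨅ k, ev k) + Λ := by linarith
  exact final
end

section
/- Let Φ : M_n(ℂ) → M_k(ℂ) be a positive unital linear map and A ∈ M_n(ℂ) Hermitian with all eigenvalues in [m, M]. Then Φ(A²) − Φ(A)² ≤ ((M − m)²/4)·I_k in the Loewner order (Bhatia–Davis inequality for positive maps). -/
open Matrix BigOperators Finset
open scoped ComplexOrder

lemma conj_diag_psd {n : ℕ} (U : Matrix (Fin n) (Fin n) ℂ) (d : Fin n → ℝ)
    (hd : ∀ i, 0 ≤ d i) :
    (U * Matrix.diagonal (fun i => (d i : ℂ)) * Uᴴ).PosSemidef := by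
  refine (Matrix.posSemidef_diagonal_iff.mpr fun i => ?_).mul_mul_conjTranspose_same U
  exact_mod_cast hd i

lemma smul_sub_conj {n : ℕ} (U : Matrix (Fin n) (Fin n) ℂ) (h : U * Uᴴ = 1)
    (r : ℂ) (d : Fin n → ℂ) :
    r • (1 : Matrix (Fin n) (Fin n) ℂ) - U * Matrix.diagonal d * Uᴴ
      = U * Matrix.diagonal (fun i => r - d i) * Uᴴ := by
  have h1 : r • (1 : Matrix (Fin n) (Fin n) ℂ)
      = U * Matrix.diagonal (fun _ : Fin n => r) * Uᴴ := by
    rw [← Matrix.smul_one_eq_diagonal, Matrix.mul_smul, Matrix.smul_mul, mul_one, h]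
  rw [h1, ← Matrix.sub_mul, ← Matrix.mul_sub, Matrix.diagonal_sub]

lemma conj_sub_smul {n : ℕ} (U : Matrix (Fin n) (Fin n) ℂ) (h : U * Uᴴ = 1)
    (r : ℂ) (d : Fin n → ℂ) :
    U * Matrix.diagonal d * Uᴴ - r • (1 : Matrix (Fin n) (Fin n) ℂ)
      = U * Matrix.diagonal (fun i => d i - r) * Uᴴ := by
  have h1 : r • (1 : Matrix (Fin n) (Fin n) ℂ)
      = U * Matrix.diagonal (fun _ : Fin n => r) * Uᴴ := by
    rw [← Matrix.smul_one_eq_diagonal, Matrix.mul_smul, Matrix.smul_mul, mul_one, h]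
  rw [h1, ← Matrix.sub_mul, ← Matrix.mul_sub, Matrix.diagonal_sub]

lemma conj_mul_conj {n : ℕ} (U : Matrix (Fin n) (Fin n) ℂ) (h : Uᴴ * U = 1)
    (d e : Fin n → ℂ) :
    (U * Matrix.diagonal d * Uᴴ) * (U * Matrix.diagonal e * Uᴴ)
      = U * Matrix.diagonal (fun i => d i * e i) * Uᴴ := by
  rw [Matrix.mul_assoc (U * Matrix.diagonal d) Uᴴ, ← Matrix.mul_assoc Uᴴ (U * Matrix.diagonal e),
    ← Matrix.mul_assoc Uᴴ U, h, Matrix.one_mul, ← Matrix.mul_assoc,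
    Matrix.mul_assoc U, Matrix.diagonal_mul_diagonal]

set_option maxHeartbeats 1000000 in
/-- Bhatia–Davis: For a positive unital linear map `Φ` and a Hermitian
matrix `A` with spectrum in `[m, M]`, `Φ(A²) − Φ(A)² ≤ ((M−m)²/4)·I` in the Loewner order. -/
theorem stmt3 {n k : ℕ} (Φ : Matrix (Fin n) (Fin n) ℂ →ₗ[ℂ] Matrix (Fin k) (Fin k) ℂ)
    (hpos : ∀ A : Matrix (Fin n) (Fin n) ℂ, A.PosSemidef → (Φ A).PosSemidef)
    (hu : Φ 1 = 1)
    (A : Matrix (Fin n) (Fin n) ℂ) (hA : A.IsHermitian) (m M : ℝ)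
    (hspec : ∀ i, hA.eigenvalues i ∈ Set.Icc m M) :
    (((M - m) ^ 2 / 4 : ℝ) • (1 : Matrix (Fin k) (Fin k) ℂ)
      - (Φ (A ^ 2) - (Φ A) ^ 2)).PosSemidef := by
  classical
  set U : Matrix (Fin n) (Fin n) ℂ := (hA.eigenvectorUnitary : Matrix (Fin n) (Fin n) ℂ) with hUdef
  set lam := hA.eigenvalues with hlam
  have hUU : Uᴴ * U = 1 := by
    simpa [Matrix.star_eq_conjTranspose] using
      (Matrix.mem_unitaryGroup_iff'.mp hA.eigenvectorUnitary.2)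
  have hUU' : U * Uᴴ = 1 := by
    simpa [Matrix.star_eq_conjTranspose] using
      (Matrix.mem_unitaryGroup_iff.mp hA.eigenvectorUnitary.2)
  have hAspec : A = U * Matrix.diagonal (fun i => (lam i : ℂ)) * Uᴴ := by
    exact hA.spectral_theorem
  -- the product (M•1 - A) * (A - m•1)
  have hP : ((M : ℂ) • 1 - A) * (A - (m : ℂ) • 1)
      = U * Matrix.diagonal (fun i => ((((M - lam i) * (lam i - m) : ℝ)) : ℂ)) * Uᴴ := by
    conv_lhs => rw [hAspec]
    rw [smul_sub_conj U hUU', conj_sub_smul U hUU', conj_mul_conj U hUU]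
    congr 1
    congr 1
    ext i
    push_cast
    ring
  have hPpsd : (((M : ℂ) • 1 - A) * (A - (m : ℂ) • 1)).PosSemidef := by
    rw [hP]
    refine conj_diag_psd U _ fun i => ?_
    exact mul_nonneg (by linarith [(hspec i).2]) (by linarith [(hspec i).1])
  -- A - m•1 is PSD, used for hermitianity of Φ A
  have hAm : (A - (m : ℂ) • 1).PosSemidef := by
    have heq : A - (m : ℂ) • 1 = U * Matrix.diagonal (fun i => ((lam i - m : ℝ) : ℂ)) * Uᴴ := by
      conv_lhs => rw [hAspec]
      rw [conj_sub_smul U hUU']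
      congr 1
      congr 1
      ext i
      push_cast
      ring
    rw [heq]
    exact conj_diag_psd U _ fun i => by linarith [(hspec i).1]
  -- Φ A is Hermitian
  have hXherm : (Φ A).IsHermitian := by
    have h1 : Φ A = Φ (A - (m : ℂ) • 1) + (m : ℂ) • 1 := by
      rw [map_sub, Φ.map_smul, hu]; abel
    rw [h1]
    refine ((hpos _ hAm).isHermitian).add ?_
    simp [Matrix.IsHermitian, Matrix.conjTranspose_smul]
  set X := Φ A with hX
  set Y := Φ (A ^ 2) with hY
  -- image of the product under Φ
  have hB : (((M + m : ℂ)) • X - Y - ((m * M : ℂ)) • 1).PosSemidef := by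
    have hexp : ((M : ℂ) • 1 - A) * (A - (m : ℂ) • 1)
        = ((M + m : ℂ)) • A - A ^ 2 - ((m * M : ℂ)) • 1 := by
      simp only [Matrix.sub_mul, Matrix.mul_sub, Matrix.smul_mul, Matrix.mul_smul,
        Matrix.one_mul, Matrix.mul_one, smul_smul, pow_two, add_smul]
      module
    have hps := hpos _ hPpsd
    rw [hexp, map_sub, map_sub, Φ.map_smul, Φ.map_smul, hu] at hps
    exact hps
  -- the square term
  set C := (((M + m) / 2 : ℂ)) • (1 : Matrix (Fin k) (Fin k) ℂ) - X with hC
  have hCherm : C.IsHermitian := by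
    refine Matrix.IsHermitian.sub ?_ hXherm
    simp [Matrix.IsHermitian, Matrix.conjTranspose_smul, ← Complex.ofReal_div]
  have hC2 : (C ^ 2).PosSemidef := by
    rw [pow_two]
    nth_rewrite 1 [← hCherm.eq]
    exact Matrix.posSemidef_conjTranspose_mul_self C
  -- the key identity
  have hreal : (((M - m) ^ 2 / 4 : ℝ)) • (1 : Matrix (Fin k) (Fin k) ℂ)
      = (((M - m) ^ 2 / 4 : ℂ)) • 1 := by
    ext i j
    simp [Complex.real_smul]
  have key : (((M - m) ^ 2 / 4 : ℝ)) • (1 : Matrix (Fin k) (Fin k) ℂ) - (Y - X ^ 2)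
      = C ^ 2 + (((M + m : ℂ)) • X - Y - ((m * M : ℂ)) • 1) := by
    rw [hreal, hC]
    have hsq : ((((M + m) / 2 : ℂ)) • (1 : Matrix (Fin k) (Fin k) ℂ) - X) ^ 2
        = ((((M + m) / 2 : ℂ)) ^ 2) • 1 - ((M + m : ℂ)) • X + X ^ 2 := by
      simp only [pow_two, Matrix.sub_mul, Matrix.mul_sub, Matrix.smul_mul, Matrix.mul_smul,
        Matrix.one_mul, Matrix.mul_one, smul_smul]
      have h2 : (M + m : ℂ) = (M + m) / 2 + (M + m) / 2 := by ring
      rw [h2, add_smul]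
      module
    rw [hsq]
    have h1 : ((M - m : ℂ)) ^ 2 / 4 = (((M + m) / 2 : ℂ)) ^ 2 - (m * M : ℂ) := by ring
    rw [h1, sub_smul]
    module
  rw [key]
  exact hC2.add hB
end

section
/- Let A be an n×n matrix with nonnegative entries, and let X be the symmetric matrix with entries x_{ij} = min{a_{ij}, a_{ji}}. Then for any positive unital linear functional φ on M_n(ℂ), ρ(A) ≥ φ(X). -/
open Matrix BigOperators Finset
open scoped ComplexOrder

open scoped ENNReal NNReal

attribute [local instance] Matrix.linftyOpNormedRing Matrix.linftyOpNormedAlgebra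

lemma pow_entry_bounds {n : ℕ} {B C : Matrix (Fin n) (Fin n) ℝ}
    (hB : ∀ i j, 0 ≤ B i j) (hBC : ∀ i j, B i j ≤ C i j) (k : ℕ) :
    ∀ i j, 0 ≤ (B ^ k) i j ∧ (B ^ k) i j ≤ (C ^ k) i j := by
  induction k with
  | zero => intro i j; simp [Matrix.one_apply]; split <;> simp
  | succ k ih =>
    intro i j
    rw [pow_succ, pow_succ, Matrix.mul_apply, Matrix.mul_apply]
    constructor
    · exact Finset.sum_nonneg fun l _ => mul_nonneg (ih i l).1 (hB l j)
    · refine Finset.sum_le_sum fun l _ => ?_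
      exact mul_le_mul (ih i l).2 (hBC l j) (hB l j) (le_trans (ih i l).1 (ih i l).2)

lemma nnnorm_map_le {n : ℕ} {B C : Matrix (Fin n) (Fin n) ℝ}
    (h0 : ∀ i j, 0 ≤ B i j) (h : ∀ i j, B i j ≤ C i j) :
    ‖B.map (Complex.ofReal)‖₊ ≤ ‖C.map (Complex.ofReal)‖₊ := by
  rw [Matrix.linfty_opNNNorm_def, Matrix.linfty_opNNNorm_def]
  refine Finset.sup_mono_fun fun i _ => Finset.sum_le_sum fun j _ => ?_
  have : ‖(B i j : ℂ)‖ ≤ ‖(C i j : ℂ)‖ := by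
    simp only [Complex.norm_real, Real.norm_eq_abs, abs_of_nonneg (h0 i j),
      abs_of_nonneg ((h0 i j).trans (h i j))]
    exact h i j
  simpa [Matrix.map_apply, ← NNReal.coe_le_coe, coe_nnnorm] using this

/-- For nonnegative `A`, `X = (min{a_{ij}, a_{ji}})` and any positive unital
linear functional `φ`, `ρ(A) ≥ φ(X)`. -/
theorem stmt7 {n : ℕ} (A : Matrix (Fin n) (Fin n) ℝ) (hnn : ∀ i j, 0 ≤ A i j)
    (X : Matrix (Fin n) (Fin n) ℝ) (hX : ∀ i j, X i j = min (A i j) (A j i))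
    (φ : Matrix (Fin n) (Fin n) ℂ →ₗ[ℂ] ℂ)
    (hpos : ∀ P : Matrix (Fin n) (Fin n) ℂ, P.PosSemidef → 0 ≤ φ P)
    (hu : φ 1 = 1) :
    (φ (X.map Complex.ofReal)).re ≤ specRad A := by
  rcases Nat.eq_zero_or_pos n with hn | hn
  · exfalso
    subst hn
    have h1 : (1 : Matrix (Fin 0) (Fin 0) ℂ) = 0 := Subsingleton.elim _ _
    rw [h1, map_zero] at hu
    exact zero_ne_one hu
  haveI : Nonempty (Fin n) := ⟨⟨0, hn⟩⟩
  set A' := A.map Complex.ofReal with hA'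
  set X' := X.map Complex.ofReal with hX'
  -- X' is Hermitian
  have hH : X'.IsHermitian := by
    ext i j
    simp only [hX', conjTranspose_apply, Matrix.map_apply, Complex.star_def,
      Complex.conj_ofReal]
    rw [hX j i, hX i j]
    norm_cast
    exact min_comm _ _
  -- largest eigenvalue
  obtain ⟨i₀, hi₀⟩ := Finset.exists_mem_eq_sup' (Finset.univ_nonempty) hH.eigenvalues
  set t : ℝ := Finset.univ.sup' Finset.univ_nonempty hH.eigenvalues with ht
  -- t • 1 - X' is PSD
  have hUnit : (hH.eigenvectorUnitary : Matrix (Fin n) (Fin n) ℂ) *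
      star (hH.eigenvectorUnitary : Matrix (Fin n) (Fin n) ℂ) = 1 :=
    (Matrix.mem_unitaryGroup_iff).mp hH.eigenvectorUnitary.2
  have hdiagPSD : Matrix.PosSemidef (Matrix.diagonal fun i => ((t - hH.eigenvalues i : ℝ) : ℂ)) := by
    refine Matrix.posSemidef_diagonal_iff.mpr fun i => ?_
    rw [Complex.zero_le_real]
    have : hH.eigenvalues i ≤ t := Finset.le_sup' hH.eigenvalues (Finset.mem_univ i)
    linarith
  have hdecomp : (t : ℂ) • (1 : Matrix (Fin n) (Fin n) ℂ) - X' =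
      (hH.eigenvectorUnitary : Matrix (Fin n) (Fin n) ℂ) *
        (Matrix.diagonal fun i => ((t - hH.eigenvalues i : ℝ) : ℂ)) *
        star (hH.eigenvectorUnitary : Matrix (Fin n) (Fin n) ℂ) := by
    have hdiag : (Matrix.diagonal fun i => ((t - hH.eigenvalues i : ℝ) : ℂ)) =
        (t : ℂ) • (1 : Matrix (Fin n) (Fin n) ℂ)
          - Matrix.diagonal (RCLike.ofReal ∘ hH.eigenvalues) := by
      ext i j
      rcases eq_or_ne i j with rfl | hij
      · simp only [Matrix.diagonal_apply_eq, Matrix.sub_apply, Matrix.smul_apply,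
          Matrix.one_apply_eq, smul_eq_mul, mul_one, Function.comp_apply,
          Complex.ofReal_sub]
        rfl
      · simp [Matrix.diagonal_apply_ne _ hij, Matrix.one_apply_ne hij]
    rw [hdiag, Matrix.mul_sub, Matrix.sub_mul]
    congr 1
    · rw [mul_smul_comm, mul_one, smul_mul_assoc, hUnit]
    · exact hH.spectral_theorem
  have hPSD : Matrix.PosSemidef ((t : ℂ) • (1 : Matrix (Fin n) (Fin n) ℂ) - X') := by
    rw [hdecomp]
    exact hdiagPSD.mul_mul_conjTranspose_same _
  -- φ bound: (φ X').re ≤ t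
  have hφt : (φ X').re ≤ t := by
    have h := hpos _ hPSD
    rw [map_sub, LinearMap.map_smul, hu, smul_eq_mul, mul_one] at h
    have h2 := (Complex.le_def.mp h).1
    simp only [Complex.zero_re, Complex.sub_re, Complex.ofReal_re, sub_nonneg] at h2
    exact h2
  -- t is in the spectrum of X'
  have htspec : (t : ℂ) ∈ spectrum ℂ X' := by
    have h1 : hH.eigenvalues i₀ ∈ spectrum ℝ X' := hH.eigenvalues_mem_spectrum_real i₀
    have h2 := spectrum.algebraMap_mem ℂ h1
    rw [hi₀.2]
    simpa [Complex.coe_algebraMap] using h2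
  -- norm comparison of powers
  have hXA : ∀ i j, X i j ≤ A i j := fun i j => (hX i j) ▸ min_le_left _ _
  have hX0 : ∀ i j, 0 ≤ X i j := fun i j => (hX i j) ▸ le_min (hnn i j) (hnn j i)
  have hmp : ∀ (M : Matrix (Fin n) (Fin n) ℝ) (k : ℕ),
      (M.map Complex.ofReal) ^ k = (M ^ k).map Complex.ofReal := by
    intro M k
    have := map_pow (Complex.ofRealHom.mapMatrix) M k
    have h2 := this.symm
    simp only [RingHom.mapMatrix_apply] at h2
    exact h2
  have hle : ∀ k : ℕ, ‖X' ^ k‖₊ ≤ ‖A' ^ k‖₊ := by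
    intro k
    rw [hX', hA', hmp, hmp]
    exact nnnorm_map_le (fun i j => (pow_entry_bounds hX0 hXA k i j).1)
      (fun i j => (pow_entry_bounds hX0 hXA k i j).2)
  -- Gelfand comparison
  have hg1 := spectrum.pow_nnnorm_pow_one_div_tendsto_nhds_spectralRadius X'
  have hg2 := spectrum.pow_nnnorm_pow_one_div_tendsto_nhds_spectralRadius A'
  have hsr : spectralRadius ℂ X' ≤ spectralRadius ℂ A' := by
    refine le_of_tendsto_of_tendsto' hg1 hg2 fun k => ?_
    exact ENNReal.rpow_le_rpow (by exact_mod_cast hle k) (by positivity)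
  -- spectralRadius A' ≤ ofReal (specRad A)
  have hbdd : BddAbove ((fun μ : ℂ => ‖μ‖) '' spectrum ℂ A') :=
    ((A'.finite_spectrum).image _).bddAbove
  have hAspec : spectralRadius ℂ A' ≤ ENNReal.ofReal (specRad A) := by
    rw [spectralRadius]
    refine iSup₂_le fun μ hμ => ?_
    have h1 : ‖μ‖ ≤ specRad A := le_csSup hbdd ⟨μ, hμ, rfl⟩
    calc (‖μ‖₊ : ℝ≥0∞) = ENNReal.ofReal (‖μ‖) := by
          exact (ofReal_norm μ).symm
      _ ≤ ENNReal.ofReal (specRad A) := ENNReal.ofReal_le_ofReal h1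
  -- 0 ≤ specRad A
  have hne : (spectrum ℂ A').Nonempty := spectrum.nonempty A'
  obtain ⟨mu0, hmu0⟩ := hne
  have hspecnn : 0 ≤ specRad A :=
    le_trans (norm_nonneg mu0) (le_csSup hbdd ⟨mu0, hmu0, rfl⟩)
  -- t in spectralRadius X'
  have htle : (‖(t : ℂ)‖₊ : ℝ≥0∞) ≤ spectralRadius ℂ X' := by
    rw [spectralRadius]
    exact le_iSup₂ (f := fun μ (_ : μ ∈ spectrum ℂ X') => (‖μ‖₊ : ℝ≥0∞)) (t : ℂ) htspec
  have hfinal : ‖(t : ℂ)‖ ≤ specRad A := by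
    have : (‖(t : ℂ)‖₊ : ℝ≥0∞) ≤ ENNReal.ofReal (specRad A) :=
      le_trans htle (le_trans hsr hAspec)
    rw [show ((‖(t : ℂ)‖₊ : ℝ≥0∞)) = ENNReal.ofReal ‖(t : ℂ)‖ from (ofReal_norm _).symm] at this
    exact (ENNReal.ofReal_le_ofReal_iff hspecnn).mp this
  calc (φ X').re ≤ t := hφt
    _ ≤ ‖(t : ℂ)‖ := by rw [Complex.norm_real, Real.norm_eq_abs]; exact le_abs_self t
    _ ≤ specRad A := hfinal
end

section
/- Let A be an n×n matrix with nonnegative entries and set x_{ij} = min{a_{ij}, a_{ji}}. Then ρ(A) ≥ (1/n)·∑_{i,j} x_{ij}. -/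
open Matrix BigOperators Finset
open scoped NNReal ENNReal

section Aux

attribute [local instance] Matrix.linftyOpNormedRing Matrix.linftyOpNormedAlgebra

variable {n : ℕ}

/-- Entrywise monotonicity of powers for entrywise-nonneg matrices. -/
lemma aux_pow_mono (A B : Matrix (Fin n) (Fin n) ℝ)
    (hB : ∀ i j, 0 ≤ B i j) (hBA : ∀ i j, B i j ≤ A i j) (k : ℕ) :
    ∀ i j, 0 ≤ (B ^ k) i j ∧ (B ^ k) i j ≤ (A ^ k) i j := by
  induction k with
  | zero =>
    intro i j
    by_cases h : i = j <;> simp [pow_zero, Matrix.one_apply, h]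
  | succ k ih =>
    intro i j
    rw [pow_succ, pow_succ, Matrix.mul_apply, Matrix.mul_apply]
    constructor
    · exact Finset.sum_nonneg fun l _ => mul_nonneg (ih i l).1 (hB l j)
    · refine Finset.sum_le_sum fun l _ => ?_
      exact mul_le_mul (ih i l).2 (hBA l j) (hB l j)
        (le_trans (ih i l).1 (ih i l).2)

end Aux

/-- For nonnegative `A` and `x_{ij} = min{a_{ij}, a_{ji}}`,
`ρ(A) ≥ (1/n)·∑_{i,j} x_{ij}`. -/
theorem stmt8 {n : ℕ} (A : Matrix (Fin n) (Fin n) ℝ) (hnn : ∀ i j, 0 ≤ A i j) :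
    (1 / (n : ℝ)) * ∑ i : Fin n, ∑ j : Fin n, min (A i j) (A j i) ≤ specRad A := by
  classical
  letI : NormedRing (Matrix (Fin n) (Fin n) ℂ) := Matrix.linftyOpNormedRing
  letI : NormedAlgebra ℂ (Matrix (Fin n) (Fin n) ℂ) := Matrix.linftyOpNormedAlgebra
  haveI : CompleteSpace (Matrix (Fin n) (Fin n) ℂ) := FiniteDimensional.complete ℂ _
  rcases Nat.eq_zero_or_pos n with hn | hn
  · subst hn
    have hempty : spectrum ℂ (A.map Complex.ofReal) = ∅ := by
      ext μ
      simp only [Set.mem_empty_iff_false, iff_false]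
      intro hμ
      exact (spectrum.mem_iff.mp hμ) (isUnit_of_subsingleton _)
    simp [specRad, hempty, Real.sSup_empty]
  -- n ≥ 1
  have hnR : (0:ℝ) < n := by exact_mod_cast hn
  set B : Matrix (Fin n) (Fin n) ℝ := Matrix.of fun i j => min (A i j) (A j i) with hBdef
  have hB0 : ∀ i j, 0 ≤ B i j := fun i j => le_min (hnn i j) (hnn j i)
  have hBA : ∀ i j, B i j ≤ A i j := fun i j => min_le_left _ _
  have hBsymm : Bᵀ = B := by
    ext i j; simp [hBdef, min_comm]
  set s : ℝ := ∑ i : Fin n, ∑ j : Fin n, min (A i j) (A j i) with hs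
  have hsB : s = ∑ i : Fin n, ∑ j : Fin n, B i j := by
    simp [hs, hBdef]
  have hs0 : 0 ≤ s := by
    rw [hsB]; exact Finset.sum_nonneg fun i _ => Finset.sum_nonneg fun j _ => hB0 i j
  set r : ℝ := s / n with hr
  have hr0 : 0 ≤ r := div_nonneg hs0 hnR.le
  -- key sum estimate for powers of B along 2^m
  have key : ∀ m : ℕ, n * r ^ (2 ^ m) ≤ ∑ i : Fin n, ∑ j : Fin n, (B ^ (2 ^ m)) i j := by
    intro m
    induction m with
    | zero =>
      have : (n:ℝ) * r = s := by rw [hr]; field_simp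
      simpa [pow_one, this] using le_of_eq hsB
    | succ m ih =>
      set w : Fin n → ℝ := (B ^ (2 ^ m)) *ᵥ (fun _ => (1:ℝ)) with hw
      have hsum_w : ∑ i : Fin n, ∑ j : Fin n, (B ^ (2 ^ m)) i j = ∑ i, w i := by
        simp [hw, Matrix.mulVec, dotProduct]
      have hpow : B ^ (2 ^ (m+1)) = (B ^ (2 ^ m)) * (B ^ (2 ^ m)) := by
        rw [← pow_add]; ring_nf
      have hsq : ∑ i : Fin n, ∑ j : Fin n, (B ^ (2 ^ (m+1))) i j = ∑ l, w l ^ 2 := by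
        rw [hpow]
        have hsymmpow : ∀ l i, (B ^ (2 ^ m)) l i = (B ^ (2 ^ m)) i l := by
          intro l i
          conv_lhs => rw [← hBsymm]
          rw [← Matrix.transpose_pow]
          rfl
        calc ∑ i : Fin n, ∑ j : Fin n, ((B ^ (2^m)) * (B ^ (2^m))) i j
            = ∑ i : Fin n, ∑ j : Fin n, ∑ l : Fin n,
                (B ^ (2^m)) i l * (B ^ (2^m)) l j := by
              simp [Matrix.mul_apply]
          _ = ∑ l : Fin n, (∑ i, (B ^ (2^m)) i l) * (∑ j, (B ^ (2^m)) l j) := by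
              have hswap : (∑ i : Fin n, ∑ j : Fin n, ∑ l : Fin n,
                  (B ^ (2^m)) i l * (B ^ (2^m)) l j)
                  = ∑ i : Fin n, ∑ l : Fin n, ∑ j : Fin n,
                  (B ^ (2^m)) i l * (B ^ (2^m)) l j :=
                Finset.sum_congr rfl fun i _ => Finset.sum_comm
              rw [hswap, Finset.sum_comm]
              refine Finset.sum_congr rfl fun l _ => ?_
              rw [Finset.sum_mul]
              refine Finset.sum_congr rfl fun i _ => ?_
              rw [Finset.mul_sum]
          _ = ∑ l, w l ^ 2 := by
              refine Finset.sum_congr rfl fun l _ => ?_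
              have h1 : ∑ i, (B ^ (2^m)) i l = w l := by
                simp [hw, Matrix.mulVec, dotProduct, hsymmpow]
              have h2 : ∑ j, (B ^ (2^m)) l j = w l := by
                simp [hw, Matrix.mulVec, dotProduct]
              rw [h1, h2, sq]
      -- Cauchy–Schwarz
      have hCS : (∑ i, w i) ^ 2 ≤ (n:ℝ) * ∑ i, w i ^ 2 := by
        have := sq_sum_le_card_mul_sum_sq (s := (Finset.univ : Finset (Fin n))) (f := w)
        simpa using this
      have h1 : (n * r ^ (2 ^ m)) ^ 2 ≤ (∑ i, w i) ^ 2 := by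
        have hwn : 0 ≤ n * r ^ (2 ^ m) := by positivity
        exact pow_le_pow_left₀ hwn (hsum_w ▸ ih) 2
      have : (n:ℝ) * (n * r ^ (2^m * 2)) ≤ (n:ℝ) * ∑ i, w i ^ 2 := by
        calc (n:ℝ) * (n * r ^ (2^m * 2)) = (n * r ^ (2 ^ m)) ^ 2 := by rw [pow_mul]; ring
          _ ≤ (∑ i, w i) ^ 2 := h1
          _ ≤ (n:ℝ) * ∑ i, w i ^ 2 := hCS
      have hfin : n * r ^ (2 ^ (m+1)) ≤ ∑ i, w i ^ 2 := by
        have h2 : 2 ^ (m+1) = 2 ^ m * 2 := by ring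
        rw [h2]
        exact le_of_mul_le_mul_left this hnR
      rw [hsq]; exact hfin
  -- norm lower bound for powers of the complex matrix
  set a : Matrix (Fin n) (Fin n) ℂ := A.map Complex.ofReal with ha
  have hmap : ∀ k : ℕ, a ^ k = (A ^ k).map Complex.ofReal := by
    intro k
    have : a = Complex.ofRealHom.mapMatrix A := rfl
    rw [this, ← map_pow]
    rfl
  have hnorm : ∀ m : ℕ, r ^ (2 ^ m) ≤ ‖a ^ (2 ^ m)‖ := by
    intro m
    set k := 2 ^ m
    have hAk : ∀ i j, 0 ≤ (A ^ k) i j := fun i j =>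
      (aux_pow_mono A A hnn (fun _ _ => le_refl _) k i j).1
    have hBAk : ∀ i j, (B ^ k) i j ≤ (A ^ k) i j := fun i j =>
      (aux_pow_mono A B hB0 hBA k i j).2
    have hsumAk : n * r ^ k ≤ ∑ i : Fin n, ∑ j : Fin n, (A ^ k) i j :=
      le_trans (key m) (Finset.sum_le_sum fun i _ => Finset.sum_le_sum fun j _ => hBAk i j)
    -- each row sum of a^k is at most the norm
    have hrow : ∀ i : Fin n, ∑ j : Fin n, (A ^ k) i j ≤ ‖a ^ k‖ := by
      intro i
      have hentry : ∀ j, ‖(a ^ k) i j‖₊ = ((A ^ k) i j).toNNReal := by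
        intro j
        rw [hmap k]
        simp only [Matrix.map_apply]
        ext
        simp [Real.norm_eq_abs, abs_of_nonneg (hAk i j), Real.coe_toNNReal _ (hAk i j)]
      rw [Matrix.linfty_opNorm_def]
      have hle : (∑ j, ‖(a ^ k) i j‖₊) ≤ Finset.univ.sup fun i => ∑ j, ‖(a ^ k) i j‖₊ :=
        Finset.le_sup (f := fun i => ∑ j, ‖(a ^ k) i j‖₊) (Finset.mem_univ i)
      calc ∑ j : Fin n, (A ^ k) i j = ((∑ j, ‖(a ^ k) i j‖₊ : NNReal) : ℝ) := by
            push_cast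
            refine Finset.sum_congr rfl fun j _ => ?_
            rw [hmap k]
            simp [Matrix.map_apply, Complex.norm_real, Real.norm_eq_abs,
              abs_of_nonneg (hAk i j)]
        _ ≤ _ := by exact_mod_cast hle
    have hsum_le : ∑ i : Fin n, ∑ j : Fin n, (A ^ k) i j ≤ n * ‖a ^ k‖ := by
      calc ∑ i : Fin n, ∑ j : Fin n, (A ^ k) i j ≤ ∑ _i : Fin n, ‖a ^ k‖ :=
            Finset.sum_le_sum fun i _ => hrow i
        _ = n * ‖a ^ k‖ := by simp [Finset.sum_const, nsmul_eq_mul]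
    have := le_trans hsumAk hsum_le
    exact le_of_mul_le_mul_left (by linarith) hnR
  -- Gelfand's formula gives a lower bound on the spectral radius
  have hspec : ENNReal.ofReal r ≤ spectralRadius ℂ a := by
    have htend := spectrum.pow_nnnorm_pow_one_div_tendsto_nhds_spectralRadius a
    have hsub : Filter.Tendsto (fun m : ℕ => (2:ℕ) ^ m) Filter.atTop Filter.atTop :=
      tendsto_pow_atTop_atTop_of_one_lt (by norm_num)
    have htend2 := htend.comp hsub
    refine ge_of_tendsto htend2 (Filter.Eventually.of_forall fun m => ?_)
    simp only [Function.comp_apply]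
    set k : ℕ := 2 ^ m with hk
    have hkpos : 0 < (k:ℝ) := by positivity
    have h1 : ENNReal.ofReal (r ^ k) ≤ (‖a ^ k‖₊ : ℝ≥0∞) := by
      rw [← enorm_eq_nnnorm, ← ofReal_norm]
      exact ENNReal.ofReal_le_ofReal (hnorm m)
    have h2 : (ENNReal.ofReal r) ^ k ≤ (‖a ^ k‖₊ : ℝ≥0∞) := by
      rwa [← ENNReal.ofReal_pow hr0]
    have h3 : ((ENNReal.ofReal r) ^ k) ^ (1/(k:ℝ)) ≤ ((‖a ^ k‖₊ : ℝ≥0∞)) ^ (1/(k:ℝ)) :=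
      ENNReal.rpow_le_rpow h2 (by positivity)
    have h4 : ((ENNReal.ofReal r) ^ k) ^ (1/(k:ℝ)) = ENNReal.ofReal r := by
      rw [← ENNReal.rpow_natCast, ← ENNReal.rpow_mul, mul_one_div,
        div_self hkpos.ne', ENNReal.rpow_one]
    rw [← h4]
    exact h3
  -- extract an eigenvalue attaining the spectral radius
  haveI : Nonempty (Fin n) := ⟨⟨0, hn⟩⟩
  obtain ⟨z, hz, hznorm⟩ := spectrum.exists_nnnorm_eq_spectralRadius a
  have hz' : ENNReal.ofReal r ≤ (‖z‖₊ : ℝ≥0∞) := hznorm ▸ hspec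
  have hrz : r ≤ ‖z‖ := by
    rw [← enorm_eq_nnnorm, ← ofReal_norm, ENNReal.ofReal_le_ofReal_iff (norm_nonneg z)] at hz'
    exact hz'
  have hbdd : BddAbove ((fun μ : ℂ => ‖μ‖) '' spectrum ℂ a) :=
    ((spectrum.isCompact a).image continuous_norm).bddAbove
  have hmem : ‖z‖ ∈ (fun μ : ℂ => ‖μ‖) '' spectrum ℂ a := ⟨z, hz, rfl⟩
  have hfinal : ‖z‖ ≤ specRad A := le_csSup hbdd hmem
  have habs : r ≤ ‖z‖ := hrz
  calc (1 / (n : ℝ)) * s = r := by rw [hr]; ring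
    _ ≤ ‖z‖ := habs
    _ ≤ specRad A := hfinal
end

section
/- (Nagy's inequality) Let x₁, ..., xₙ be real numbers with a ≤ xᵢ ≤ b for all i, and suppose a = min_i xᵢ and b = max_i xᵢ. Then (1/n)∑ xᵢ² − ((1/n)∑ xᵢ)² ≥ (b − a)²/(2n). -/
open Matrix BigOperators Finset

/-- Nagy's inequality: If `a = min_i xᵢ` and `b = max_i xᵢ`, then
`(1/n)∑ xᵢ² − ((1/n)∑ xᵢ)² ≥ (b − a)²/(2n)`. -/
theorem stmt13 {n : ℕ} (hn : 1 ≤ n) (x : Fin n → ℝ) (a b : ℝ)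
    (ha : IsLeast (Set.range x) a) (hb : IsGreatest (Set.range x) b) :
    (b - a) ^ 2 / (2 * n)
      ≤ (1 / (n : ℝ)) * ∑ i, x i ^ 2 - ((1 / (n : ℝ)) * ∑ i, x i) ^ 2 := by
  have hn' : (0:ℝ) < n := by exact_mod_cast Nat.lt_of_lt_of_le Nat.zero_lt_one hn
  set m : ℝ := (1 / (n : ℝ)) * ∑ i, x i with hm
  have hsum : ∑ i, x i = n * m := by
    rw [hm]; field_simp
  have expand : ∑ i, (x i - m)^2 = (∑ i, x i ^ 2) - n * m^2 := by
    have h1 : ∀ i : Fin n, (x i - m)^2 = x i ^ 2 - 2*m*(x i) + m^2 := fun i => by ring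
    simp_rw [h1]
    rw [Finset.sum_add_distrib, Finset.sum_sub_distrib, ← Finset.mul_sum, hsum]
    simp [Finset.card_univ]
    ring
  have key : (1 / (n : ℝ)) * ∑ i, x i ^ 2 - m ^ 2
      = (1/(n:ℝ)) * ∑ i, (x i - m)^2 := by
    rw [expand]; field_simp
  rw [key]
  obtain ⟨i, hi⟩ := ha.1
  obtain ⟨j, hj⟩ := hb.1
  by_cases hab : a = b
  · have : (b - a)^2 / (2*n) = 0 := by rw [hab]; simp
    rw [this]
    positivity
  · have hij : i ≠ j := by
      intro h; apply hab; rw [← hi, ← hj, h]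
    have hsub : ({i, j} : Finset (Fin n)) ⊆ Finset.univ := Finset.subset_univ _
    have hle : (x i - m)^2 + (x j - m)^2 ≤ ∑ k, (x k - m)^2 := by
      have := Finset.sum_le_sum_of_subset_of_nonneg hsub
        (fun k _ _ => sq_nonneg (x k - m))
      rwa [Finset.sum_insert (by simp [hij]), Finset.sum_singleton] at this
    have hab2 : (b - a)^2 / 2 ≤ (x i - m)^2 + (x j - m)^2 := by
      rw [hi, hj]; nlinarith [sq_nonneg (a + b - 2*m)]
    rw [div_le_iff₀ (by positivity), mul_comm (1/(n:ℝ)), mul_assoc]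
    calc (b-a)^2 = ((b-a)^2/2) * 2 := by ring
      _ ≤ (∑ k, (x k - m)^2) * 2 := by nlinarith
      _ ≤ (∑ k, (x k - m)^2) * (1/(n:ℝ) * (2*n)) := by
          have : (1/(n:ℝ) * (2*n)) = 2 := by field_simp
          rw [this]
end

section
/- Let A be an n×n symmetric matrix with nonnegative entries. Then λ_min(A) ≥ min_i a_{ii} − ( (1/2) ∑_{i ≠ j} a_{ij}² )^{1/2}. -/
open Matrix BigOperators Finset

/-- Key quadratic form inequality: for a nonnegative matrix and a unit vector `x`,
the quadratic form is at least `min diag − sqrt((1/2)∑ offdiag a²)`. -/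
lemma key_quadform {n : ℕ} (A : Matrix (Fin n) (Fin n) ℝ) (hnn : ∀ i j, 0 ≤ A i j)
    (x : Fin n → ℝ) (hx : ∑ i, (x i) ^ 2 = 1) :
    (⨅ i, A i i) - Real.sqrt ((1 / 2) * ∑ p ∈ Finset.univ.offDiag, (A p.1 p.2) ^ 2)
      ≤ ∑ i, ∑ j, A i j * (x i * x j) := by
  set Q : ℝ := ∑ p ∈ Finset.univ.offDiag, (A p.1 p.2) ^ 2 with hQdef
  have hQ0 : 0 ≤ Q := Finset.sum_nonneg fun p _ => sq_nonneg _
  -- split the double sum into diagonal and off-diagonal parts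
  have hsplit : ∑ i, ∑ j, A i j * (x i * x j)
      = (∑ i, A i i * (x i) ^ 2)
        + ∑ p ∈ Finset.univ.offDiag, A p.1 p.2 * (x p.1 * x p.2) := by
    rw [← Finset.sum_product']
    rw [show (Finset.univ ×ˢ Finset.univ : Finset (Fin n × Fin n))
        = Finset.univ.diag ∪ Finset.univ.offDiag from (Finset.diag_union_offDiag _).symm]
    rw [Finset.sum_union (Finset.disjoint_diag_offDiag _), Finset.sum_diag]
    congr 1
    exact Finset.sum_congr rfl fun i _ => by ring
  -- diagonal part bound
  have hdiag : (⨅ i, A i i) ≤ ∑ i, A i i * (x i) ^ 2 := by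
    have hbdd : BddBelow (Set.range fun i => A i i) := (Set.finite_range _).bddBelow
    calc (⨅ i, A i i) = (⨅ i, A i i) * ∑ i, (x i) ^ 2 := by rw [hx, mul_one]
      _ = ∑ i, (⨅ j, A j j) * (x i) ^ 2 := by rw [Finset.mul_sum]
      _ ≤ ∑ i, A i i * (x i) ^ 2 := by
          refine Finset.sum_le_sum fun i _ => ?_
          exact mul_le_mul_of_nonneg_right (ciInf_le hbdd i) (sq_nonneg _)
  -- off-diagonal part bound
  set M : Finset (Fin n × Fin n) :=
    Finset.univ.offDiag.filter (fun p => x p.1 * x p.2 < 0) with hMdef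
  have hstep1 : ∑ p ∈ M, A p.1 p.2 * (x p.1 * x p.2)
      ≤ ∑ p ∈ Finset.univ.offDiag, A p.1 p.2 * (x p.1 * x p.2) := by
    refine Finset.sum_le_sum_of_subset_of_nonneg (Finset.filter_subset _ _) ?_
    intro p hp hpM
    have hge : ¬ (x p.1 * x p.2 < 0) := fun h => hpM (Finset.mem_filter.2 ⟨hp, h⟩)
    exact mul_nonneg (hnn _ _) (not_lt.1 hge)
  have hstep2 : ∑ p ∈ M, A p.1 p.2 * (x p.1 * x p.2)
      = - ∑ p ∈ M, A p.1 p.2 * |x p.1 * x p.2| := by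
    rw [← Finset.sum_neg_distrib]
    refine Finset.sum_congr rfl fun p hp => ?_
    have hneg : x p.1 * x p.2 < 0 := (Finset.mem_filter.1 hp).2
    rw [abs_of_neg hneg]; ring
  -- Cauchy-Schwarz
  have hCS : ∑ p ∈ M, A p.1 p.2 * |x p.1 * x p.2|
      ≤ Real.sqrt (∑ p ∈ M, (A p.1 p.2) ^ 2)
        * Real.sqrt (∑ p ∈ M, |x p.1 * x p.2| ^ 2) :=
    Real.sum_mul_le_sqrt_mul_sqrt M _ _
  have hMA : ∑ p ∈ M, (A p.1 p.2) ^ 2 ≤ Q := by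
    refine Finset.sum_le_sum_of_subset_of_nonneg (Finset.filter_subset _ _) ?_
    exact fun p _ _ => sq_nonneg _
  -- the squared cross terms are at most 1/2
  have hMx : ∑ p ∈ M, |x p.1 * x p.2| ^ 2 ≤ 1 / 2 := by
    set P : Finset (Fin n) := Finset.univ.filter (fun i => 0 ≤ x i) with hPdef
    set N : Finset (Fin n) := Finset.univ.filter (fun i => ¬ 0 ≤ x i) with hNdef
    have hMsub : M ⊆ P ×ˢ N ∪ N ×ˢ P := by
      intro p hp
      have hneg : x p.1 * x p.2 < 0 := (Finset.mem_filter.1 hp).2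
      rcases mul_neg_iff.1 hneg with ⟨h1, h2⟩ | ⟨h1, h2⟩
      · exact Finset.mem_union_left _ (Finset.mem_product.2
          ⟨Finset.mem_filter.2 ⟨Finset.mem_univ _, le_of_lt h1⟩,
           Finset.mem_filter.2 ⟨Finset.mem_univ _, not_le.2 h2⟩⟩)
      · exact Finset.mem_union_right _ (Finset.mem_product.2
          ⟨Finset.mem_filter.2 ⟨Finset.mem_univ _, not_le.2 h1⟩,
           Finset.mem_filter.2 ⟨Finset.mem_univ _, le_of_lt h2⟩⟩)
    have hdisj : Disjoint (P ×ˢ N) (N ×ˢ P) := by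
      rw [Finset.disjoint_left]
      intro p hp hq
      have h1 := (Finset.mem_filter.1 (Finset.mem_product.1 hp).1).2
      have h2 := (Finset.mem_filter.1 (Finset.mem_product.1 hq).1).2
      exact h2 h1
    have h1 : ∑ p ∈ M, |x p.1 * x p.2| ^ 2
        ≤ ∑ p ∈ P ×ˢ N ∪ N ×ˢ P, |x p.1 * x p.2| ^ 2 :=
      Finset.sum_le_sum_of_subset_of_nonneg hMsub (fun p _ _ => sq_nonneg _)
    have habs : ∀ p : Fin n × Fin n, |x p.1 * x p.2| ^ 2 = (x p.1) ^ 2 * (x p.2) ^ 2 := by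
      intro p; rw [sq_abs, mul_pow]
    have h2 : ∑ p ∈ P ×ˢ N ∪ N ×ˢ P, |x p.1 * x p.2| ^ 2
        = (∑ i ∈ P, (x i) ^ 2) * (∑ i ∈ N, (x i) ^ 2)
          + (∑ i ∈ N, (x i) ^ 2) * (∑ i ∈ P, (x i) ^ 2) := by
      rw [Finset.sum_union hdisj, Finset.sum_product, Finset.sum_product]
      simp [habs, Finset.sum_mul_sum, mul_pow]
    have hst : (∑ i ∈ P, (x i) ^ 2) + (∑ i ∈ N, (x i) ^ 2) = 1 := by
      rw [hPdef, hNdef, Finset.sum_filter_add_sum_filter_not]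
      exact hx
    have hs0 : 0 ≤ ∑ i ∈ P, (x i) ^ 2 := Finset.sum_nonneg fun i _ => sq_nonneg _
    have ht0 : 0 ≤ ∑ i ∈ N, (x i) ^ 2 := Finset.sum_nonneg fun i _ => sq_nonneg _
    nlinarith [h1, h2, hst, hs0, ht0,
      sq_nonneg ((∑ i ∈ P, (x i) ^ 2) - ∑ i ∈ N, (x i) ^ 2)]
  have hsqrt : Real.sqrt (∑ p ∈ M, (A p.1 p.2) ^ 2)
      * Real.sqrt (∑ p ∈ M, |x p.1 * x p.2| ^ 2) ≤ Real.sqrt ((1 / 2) * Q) := by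
    have h1 : Real.sqrt (∑ p ∈ M, (A p.1 p.2) ^ 2) ≤ Real.sqrt Q :=
      Real.sqrt_le_sqrt hMA
    have h2 : Real.sqrt (∑ p ∈ M, |x p.1 * x p.2| ^ 2) ≤ Real.sqrt (1 / 2) :=
      Real.sqrt_le_sqrt hMx
    calc Real.sqrt (∑ p ∈ M, (A p.1 p.2) ^ 2) * Real.sqrt (∑ p ∈ M, |x p.1 * x p.2| ^ 2)
        ≤ Real.sqrt Q * Real.sqrt (1 / 2) := by
          refine mul_le_mul h1 h2 (Real.sqrt_nonneg _) (Real.sqrt_nonneg _)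
      _ = Real.sqrt ((1 / 2) * Q) := by
          rw [← Real.sqrt_mul hQ0, mul_comm]
  have hoff : - Real.sqrt ((1 / 2) * Q)
      ≤ ∑ p ∈ Finset.univ.offDiag, A p.1 p.2 * (x p.1 * x p.2) := by
    have h3 : ∑ p ∈ M, A p.1 p.2 * |x p.1 * x p.2| ≤ Real.sqrt ((1 / 2) * Q) :=
      hCS.trans hsqrt
    linarith [hstep1, hstep2, h3]
  linarith [hdiag, hoff, hsplit]

/-- For a nonnegative symmetric matrix,
`λ_min(A) ≥ min_i a_{ii} − ((1/2)∑_{i≠j} a_{ij}²)^{1/2}`. -/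
theorem stmt14 {n : ℕ} (A : Matrix (Fin n) (Fin n) ℝ)
    (hA : A.IsHermitian) (hnn : ∀ i j, 0 ≤ A i j) :
    (⨅ i, A i i) - Real.sqrt ((1 / 2) * ∑ p ∈ Finset.univ.offDiag, (A p.1 p.2) ^ 2)
      ≤ ⨅ i, hA.eigenvalues i := by
  rcases Nat.eq_zero_or_pos n with hn | hn
  · subst hn
    simp [iInf, Real.sInf_empty, Set.range_eq_empty]
  have : Nonempty (Fin n) := Fin.pos_iff_nonempty.1 hn
  refine le_ciInf fun i => ?_
  set x : Fin n → ℝ := ⇑(hA.eigenvectorBasis i) with hxdef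
  have hnorm : ‖hA.eigenvectorBasis i‖ = 1 := hA.eigenvectorBasis.orthonormal.1 i
  have hx : ∑ j, (x j) ^ 2 = 1 := by
    rw [EuclideanSpace.norm_eq] at hnorm
    have := Real.sqrt_eq_one.1 hnorm
    simpa [Real.norm_eq_abs, sq_abs] using this
  have hAv : A *ᵥ x = hA.eigenvalues i • x := hA.mulVec_eigenvectorBasis i
  have hquad : hA.eigenvalues i = ∑ j, ∑ k, A j k * (x j * x k) := by
    have h1 : ∑ j, x j * (A *ᵥ x) j = hA.eigenvalues i := by
      rw [hAv]
      simp only [Pi.smul_apply, smul_eq_mul]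
      calc ∑ j, x j * (hA.eigenvalues i * x j)
          = hA.eigenvalues i * ∑ j, (x j) ^ 2 := by
            rw [Finset.mul_sum]; exact Finset.sum_congr rfl fun j _ => by ring
        _ = hA.eigenvalues i := by rw [hx, mul_one]
    rw [← h1]
    refine Finset.sum_congr rfl fun j _ => ?_
    rw [Matrix.mulVec, dotProduct, Finset.mul_sum]
    exact Finset.sum_congr rfl fun k _ => by ring
  rw [hquad]
  exact key_quadform A hnn x hx
end

section
/- Let A be an n×n real symmetric matrix with nonnegative entries, n ≥ 3, with eigenvalues λ₁ ≤ λ₂ ≤ ... ≤ λₙ. Then the second smallest eigenvalue λ₂ is at most the third smallest diagonal entry of A. -/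
open Matrix BigOperators Finset

private lemma lemQ (al be p q r L1 L2 L3 : ℝ) (hal : al ≤ 0) (hbe : be ≤ 0)
    (hp : 0 ≤ p) (hq : 0 ≤ q) (hr : 0 ≤ r) :
    ∃ s t u : ℝ, ¬(s = 0 ∧ t = 0 ∧ u = 0) ∧ L1*s + L2*t + L3*u = 0 ∧
      al*s^2 + be*t^2 + 2*p*s*t + 2*q*s*u + 2*r*t*u ≤ 0 := by
  by_cases hL3 : L3 = 0
  · exact ⟨0, 0, 1, by simp, by simp [hL3], by norm_num⟩
  · set l1 := L1 / L3 with hl1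
    set l2 := L2 / L3 with hl2
    have hL1 : L1 = L3 * l1 := by rw [hl1]; field_simp [hL3]
    have hL2 : L2 = L3 * l2 := by rw [hl2]; field_simp [hL3]
    by_cases hA : al - 2*q*l1 ≤ 0
    · refine ⟨1, 0, -l1, by simp, by rw [hL1]; ring, by nlinarith⟩
    · by_cases hC : be - 2*r*l2 ≤ 0
      · refine ⟨0, 1, -l2, by simp, by rw [hL2]; ring, by nlinarith⟩
      · push_neg at hA hC
        set B := p - q*l2 - r*l1 with hB
        set Aq := al - 2*q*l1 with hAq
        have hql1 : q * l1 < 0 := by nlinarith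
        have hrl2 : r * l2 < 0 := by nlinarith
        have hqpos : 0 < q := hq.lt_of_ne fun h => by rw [← h] at hql1; simp at hql1
        have hrpos : 0 < r := hr.lt_of_ne fun h => by rw [← h] at hrl2; simp at hrl2
        have hl1neg : l1 < 0 := by by_contra h; push_neg at h; nlinarith [mul_nonneg hq h]
        have hl2neg : l2 < 0 := by by_contra h; push_neg at h; nlinarith [mul_nonneg hr h]
        have h1 : Aq ≤ -(2*q*l1) := by simp only [hAq]; linarith
        have h2 : be - 2*r*l2 ≤ -(2*r*l2) := by linarith
        have h3 : Aq * (be - 2*r*l2) ≤ (-(2*q*l1)) * (-(2*r*l2)) :=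
          mul_le_mul h1 h2 hC.le (by nlinarith)
        have h5 : 0 < -(q*l2) - r*l1 := by
          nlinarith [mul_pos hqpos (neg_pos.mpr hl2neg), mul_pos hrpos (neg_pos.mpr hl1neg)]
        have h4 : -(q*l2) - r*l1 ≤ B := by simp only [hB]; linarith
        have h6 : (-(q*l2) - r*l1)^2 ≤ B^2 := by nlinarith
        have key : Aq * (be - 2*r*l2) ≤ B^2 := by nlinarith [sq_nonneg (q*l2 - r*l1)]
        refine ⟨-B, Aq, -(l1*(-B) + l2*Aq), ?_, ?_, ?_⟩
        · intro ⟨_, h2, _⟩; exact absurd h2 (ne_of_gt hA)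
        · rw [hL1, hL2]; ring
        · have : al*(-B)^2 + be*Aq^2 + 2*p*(-B)*Aq + 2*q*(-B)*(-(l1*(-B) + l2*Aq)) + 2*r*Aq*(-(l1*(-B) + l2*Aq)) = Aq * (Aq * (be - 2*r*l2) - B^2) := by ring
          rw [this]
          nlinarith


set_option maxHeartbeats 1000000000 in
/-- For a nonnegative real symmetric matrix with `n ≥ 3`, the second
smallest eigenvalue is at most the third smallest diagonal entry. -/
theorem stmt15 {n : ℕ} (hn : 3 ≤ n) (A : Matrix (Fin n) (Fin n) ℝ)
    (hA : A.IsHermitian) (hnn : ∀ i j, 0 ≤ A i j)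
    (g σ : Equiv.Perm (Fin n))
    (hg : Monotone (hA.eigenvalues ∘ g)) (hσ : Monotone (A.diag ∘ σ)) :
    hA.eigenvalues (g ⟨1, by omega⟩) ≤ A.diag (σ ⟨2, by omega⟩) := by
  by_contra hcon
  push_neg at hcon
  set lam := hA.eigenvalues with hlam
  set i : Fin n := σ ⟨0, by omega⟩ with hi
  set j : Fin n := σ ⟨1, by omega⟩ with hj
  set k : Fin n := σ ⟨2, by omega⟩ with hk
  have hc : A.diag (σ ⟨2, by omega⟩) = A k k := rfl
  set c := A k k with hcc
  rw [hc] at hcon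
  have hij : i ≠ j := fun h => by
    have := σ.injective h; simp [Fin.ext_iff] at this
  have hik : i ≠ k := fun h => by
    have := σ.injective h; simp [Fin.ext_iff] at this
  have hjk : j ≠ k := fun h => by
    have := σ.injective h; simp [Fin.ext_iff] at this
  have hac : A i i ≤ c := by
    have := hσ (show (⟨0, by omega⟩ : Fin n) ≤ ⟨2, by omega⟩ by simp [Fin.mk_le_mk])
    simpa using this
  have hbc : A j j ≤ c := by
    have := hσ (show (⟨1, by omega⟩ : Fin n) ≤ ⟨2, by omega⟩ by simp [Fin.mk_le_mk])
    simpa using this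
  have hsym : ∀ a b, A b a = A a b := fun a b => by
    have := hA.apply a b; rwa [star_trivial] at this
  set b := hA.eigenvectorBasis with hbdef
  obtain ⟨s, t, u, hstu, hlin, hquad⟩ :=
    lemQ (A i i - c) (A j j - c) (A i j) (A i k) (A j k)
      (b (g ⟨0, by omega⟩) i) (b (g ⟨0, by omega⟩) j) (b (g ⟨0, by omega⟩) k)
      (by linarith) (by linarith) (hnn i j) (hnn i k) (hnn j k)
  set x : EuclideanSpace ℝ (Fin n) := WithLp.toLp 2 (fun m =>
    (if m = i then s else 0) + (if m = j then t else 0) + (if m = k then u else 0)) with hx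
  have hxi : x i = s := by simp [hx, hij, hik]
  have hxj : x j = t := by simp [hx, Ne.symm hij, hjk]
  have hxk : x k = u := by simp [hx, Ne.symm hik, Ne.symm hjk]
  have hsum : ∀ v : Fin n → ℝ, ∑ m, v m * x m = v i * s + v j * t + v k * u := by
    intro v
    simp only [hx, PiLp.toLp_apply, mul_add, mul_ite, mul_zero, Finset.sum_add_distrib,
      Finset.sum_ite_eq', Finset.mem_univ, if_true]
  have hrepr : ∀ (z : EuclideanSpace ℝ (Fin n)) m, b.repr z m = ∑ l, b m l * z l := by
    intro z m
    rw [OrthonormalBasis.repr_apply_apply]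
    simp [PiLp.inner_apply, RCLike.inner_apply]
    exact Finset.sum_congr rfl fun _ _ => mul_comm _ _
  have hinner_sum : ∀ z w : EuclideanSpace ℝ (Fin n),
      ∑ l, z l * w l = ∑ m, b.repr z m * b.repr w m := by
    intro z w
    have hip : ∀ z w : EuclideanSpace ℝ (Fin n), (inner ℝ z w : ℝ) = ∑ l, z l * w l := by
      intro z w
      rw [PiLp.inner_apply]
      simp only [RCLike.inner_apply, starRingEnd_apply, star_trivial]
      exact Finset.sum_congr rfl fun _ _ => mul_comm _ _
    rw [← hip z w, ← hip (b.repr z) (b.repr w)]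
    exact (b.repr.inner_map_map z w).symm
  set Ax : EuclideanSpace ℝ (Fin n) := (WithLp.equiv 2 (Fin n → ℝ)).symm (A *ᵥ x) with hAxdef
  have hAxl : ∀ l, Ax l = ∑ o, A l o * x o := fun l => rfl
  have hAxrepr : ∀ m, b.repr Ax m = lam m * b.repr x m := by
    intro m
    have hv := hA.mulVec_eigenvectorBasis m
    have hv' : ∀ o, ∑ l, A o l * b m l = lam m * b m o := by
      intro o
      have h2 := congrFun hv o
      simp only [← hbdef, ← hlam] at h2
      simpa [Matrix.mulVec, dotProduct] using h2
    calc b.repr Ax m = ∑ l, b m l * Ax l := hrepr _ _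
      _ = ∑ l, ∑ o, b m l * (A l o * x o) := by simp only [hAxl, Finset.mul_sum]
      _ = ∑ o, ∑ l, b m l * (A l o * x o) := Finset.sum_comm
      _ = ∑ o, (∑ l, A o l * b m l) * x o := by
            refine Finset.sum_congr rfl fun o _ => ?_
            rw [Finset.sum_mul]
            refine Finset.sum_congr rfl fun l _ => ?_
            rw [hsym o l]; ring
      _ = ∑ o, (lam m * b m o) * x o := by
            exact Finset.sum_congr rfl fun o _ => by rw [hv' o]
      _ = lam m * ∑ o, b m o * x o := by
            rw [Finset.mul_sum]; exact Finset.sum_congr rfl fun o _ => by ring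
      _ = lam m * b.repr x m := by rw [hrepr]
  set y : Fin n → ℝ := fun m => b.repr x m with hy
  have e1 : ∑ m, x m * Ax m = ∑ m, lam m * (y m)^2 := by
    rw [hinner_sum x Ax]
    refine Finset.sum_congr rfl fun m _ => ?_
    rw [hAxrepr m]; simp only [hy]; ring
  have e2 : ∑ m, x m * x m = ∑ m, (y m)^2 := by
    rw [hinner_sum x x]
    exact Finset.sum_congr rfl fun m _ => by simp only [hy]; ring
  have hy0 : y (g ⟨0, by omega⟩) = 0 := by
    simp only [hy]
    rw [hrepr, hsum (fun l => b (g ⟨0, by omega⟩) l)]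
    linarith [hlin]
  have hN : ∑ m, x m * x m = s^2 + t^2 + u^2 := by
    rw [hsum x, hxi, hxj, hxk]; ring
  have hQ : ∑ m, x m * Ax m =
      A i i * s^2 + A j j * t^2 + A k k * u^2
        + 2*(A i j)*s*t + 2*(A i k)*s*u + 2*(A j k)*t*u := by
    have h0 : ∑ m, x m * Ax m = ∑ m, Ax m * x m :=
      Finset.sum_congr rfl fun m _ => by ring
    rw [h0, hsum Ax, hAxl, hAxl, hAxl, hsum (fun o => A i o), hsum (fun o => A j o),
      hsum (fun o => A k o), hsym j i, hsym k i, hsym k j]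
    ring
  have hmono : ∀ m, m ≠ g ⟨0, by omega⟩ → lam (g ⟨1, by omega⟩) ≤ lam m := by
    intro m hm
    have h0 : g.symm m ≠ ⟨0, by omega⟩ := fun h => hm (by rw [← h]; simp)
    have h1 : (⟨1, by omega⟩ : Fin n) ≤ g.symm m := by
      rw [Fin.le_def]
      have hval : ((⟨1, by omega⟩ : Fin n) : ℕ) = 1 := rfl
      have : (g.symm m).val ≠ 0 := fun h => h0 (Fin.ext h)
      omega
    have := hg h1
    simpa using this
  have hlow : lam (g ⟨1, by omega⟩) * (∑ m, (y m)^2) ≤ ∑ m, lam m * (y m)^2 := by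
    rw [Finset.mul_sum]
    refine Finset.sum_le_sum fun m _ => ?_
    by_cases hm : m = g ⟨0, by omega⟩
    · rw [hm, hy0]; simp
    · exact mul_le_mul_of_nonneg_right (hmono m hm) (sq_nonneg _)
  have hNpos : 0 < s^2 + t^2 + u^2 := by
    rcases (show s ≠ 0 ∨ t ≠ 0 ∨ u ≠ 0 by tauto) with h | h | h <;>
      nlinarith [sq_nonneg s, sq_nonneg t, sq_nonneg u, mul_self_pos.mpr h]
  have key1 : lam (g ⟨1, by omega⟩) * (s^2 + t^2 + u^2) ≤ ∑ m, x m * Ax m := by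
    rw [e1, ← hN, e2]; exact hlow
  have key2 : ∑ m, x m * Ax m ≤ c * (s^2 + t^2 + u^2) := by
    rw [hQ]; nlinarith [hquad]
  nlinarith [mul_lt_mul_of_pos_right hcon hNpos]
end

section
/- Let A be an n×n Hermitian matrix with trace t = tr A and s² = tr(A²)/n − (tr A/n)² its eigenvalue variance. Then λ_min(A) ≥ tr(A)/n − √(n−1)·s. -/
open Matrix BigOperators Finset

private lemma ws_key {n : ℕ} (hn : 2 ≤ n) (f : Fin n → ℝ) (j : Fin n) :
    (∑ i, f i) / n - Real.sqrt (n - 1)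
        * Real.sqrt ((∑ i, f i ^ 2) / n - ((∑ i, f i) / n) ^ 2) ≤ f j := by
  have hn0 : (0:ℝ) < n := by positivity
  have hn1 : (1:ℝ) ≤ (n:ℝ) := by exact_mod_cast (by omega : 1 ≤ n)
  set m : ℝ := (∑ i, f i) / n with hm
  set μ : Fin n → ℝ := fun i => f i - m with hμ
  have h0 : ∑ i, μ i = 0 := by
    simp only [hμ, Finset.sum_sub_distrib, Finset.sum_const, card_univ, Fintype.card_fin,
      nsmul_eq_mul, hm]
    field_simp
    ring
  have hV : (∑ i, f i ^ 2) / n - m ^ 2 = (∑ i, μ i ^ 2) / n := by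
    have e1 : ∀ i : Fin n, μ i ^ 2 = f i ^ 2 - 2 * m * f i + m ^ 2 := fun i => by
      simp only [hμ]; ring
    have : ∑ i, μ i ^ 2 = ∑ i, f i ^ 2 - n * m ^ 2 := by
      rw [Finset.sum_congr rfl fun i _ => e1 i, Finset.sum_add_distrib,
        Finset.sum_sub_distrib, ← Finset.mul_sum]
      simp only [Finset.sum_const, card_univ, Fintype.card_fin, nsmul_eq_mul, hm]
      field_simp
      ring
    rw [this]
    field_simp
  have hsum : ∑ i ∈ univ.erase j, μ i = -μ j := by
    have := Finset.add_sum_erase univ μ (mem_univ j)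
    linarith [h0 ▸ this]
  have hCS : μ j ^ 2 ≤ ((n:ℝ) - 1) * ∑ i ∈ univ.erase j, μ i ^ 2 := by
    have h1 := sq_sum_le_card_mul_sum_sq (s := univ.erase j) (f := μ)
    rw [hsum] at h1
    have hc : (#(univ.erase j) : ℝ) = (n:ℝ) - 1 := by
      rw [Finset.card_erase_of_mem (mem_univ j), card_univ, Fintype.card_fin]
      push_cast [Nat.cast_sub (by omega : 1 ≤ n)]
      ring
    rw [hc] at h1
    calc μ j ^ 2 = (-μ j) ^ 2 := by ring
      _ ≤ _ := h1
  have hsplit : ∑ i, μ i ^ 2 = μ j ^ 2 + ∑ i ∈ univ.erase j, μ i ^ 2 :=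
    (Finset.add_sum_erase univ (fun i => μ i ^ 2) (mem_univ j)).symm
  have hkey : μ j ^ 2 ≤ ((n:ℝ) - 1) * ((∑ i, μ i ^ 2) / n) := by
    rw [← mul_div_assoc, le_div_iff₀ hn0]
    nlinarith [hCS, hsplit, sq_nonneg (μ j)]
  have hVnn : 0 ≤ (∑ i, μ i ^ 2) / n := by positivity
  have habs : |μ j| ≤ Real.sqrt (n - 1) * Real.sqrt ((∑ i, μ i ^ 2) / n) := by
    rw [← Real.sqrt_mul (by linarith : (0:ℝ) ≤ (n:ℝ) - 1)]
    exact Real.abs_le_sqrt hkey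
  have hneg : -μ j ≤ |μ j| := neg_le_abs _
  rw [hV]
  simp only [hμ] at hneg habs ⊢
  linarith

private lemma ws_tr1 {n : ℕ} (A : Matrix (Fin n) (Fin n) ℂ) (hA : A.IsHermitian) :
    A.trace = ∑ i, (hA.eigenvalues i : ℂ) := by
  conv_lhs => rw [hA.spectral_theorem, Unitary.conjStarAlgAut_apply]
  rw [Matrix.trace_mul_cycle]
  rw [show (star (hA.eigenvectorUnitary : Matrix (Fin n) (Fin n) ℂ))
      * (hA.eigenvectorUnitary : Matrix (Fin n) (Fin n) ℂ) = 1 from Unitary.coe_star_mul_self _]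
  rw [Matrix.one_mul, Matrix.trace_diagonal]
  rfl

private lemma ws_tr2 {n : ℕ} (A : Matrix (Fin n) (Fin n) ℂ) (hA : A.IsHermitian) :
    (A ^ 2).trace = ∑ i, (hA.eigenvalues i : ℂ) ^ 2 := by
  have hU : (star (hA.eigenvectorUnitary : Matrix (Fin n) (Fin n) ℂ))
      * (hA.eigenvectorUnitary : Matrix (Fin n) (Fin n) ℂ) = 1 := Unitary.coe_star_mul_self _
  have h2 : A ^ 2 = (hA.eigenvectorUnitary : Matrix (Fin n) (Fin n) ℂ)
      * (diagonal (Complex.ofReal ∘ hA.eigenvalues) * diagonal (Complex.ofReal ∘ hA.eigenvalues))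
      * (star (hA.eigenvectorUnitary : Matrix (Fin n) (Fin n) ℂ)) := by
    conv_lhs => rw [pow_two, hA.spectral_theorem, Unitary.conjStarAlgAut_apply]
    simp only [Matrix.mul_assoc]
    rw [← Matrix.mul_assoc (star _) _, hU, Matrix.one_mul]
    rfl
  rw [h2, Matrix.trace_mul_cycle, ← Matrix.mul_assoc, hU, Matrix.one_mul,
    Matrix.diagonal_mul_diagonal, Matrix.trace_diagonal]
  simp [pow_two]

/-- Wolkowicz–Styan: For a Hermitian matrix `A` with
`s = (tr(A²)/n − (tr A/n)²)^{1/2}`, `λ_min(A) ≥ tr(A)/n − √(n−1)·s`. -/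
theorem stmt17 {n : ℕ} (hn : 2 ≤ n) (A : Matrix (Fin n) (Fin n) ℂ)
    (hA : A.IsHermitian) :
    A.trace.re / n - Real.sqrt (n - 1)
        * Real.sqrt ((A ^ 2).trace.re / n - (A.trace.re / n) ^ 2)
      ≤ ⨅ i, hA.eigenvalues i := by
  have ht1 : A.trace.re = ∑ i, hA.eigenvalues i := by
    rw [ws_tr1 A hA, ← Complex.ofReal_sum, Complex.ofReal_re]
  have ht2 : (A ^ 2).trace.re = ∑ i, hA.eigenvalues i ^ 2 := by
    rw [ws_tr2 A hA]
    norm_cast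
  have : Nonempty (Fin n) := ⟨⟨0, by omega⟩⟩
  refine le_ciInf fun j => ?_
  rw [ht1, ht2]
  exact ws_key hn hA.eigenvalues j
end
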